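/- arXiv:2507.03554 — 5 statements merged into one kernel-verified Lean document; each statement's English description precedes it below -/
import Mathlib

section
/- If θ is an irrational real number, then 1 ≤ ω̂̂(θ) ≤ 2. -/
open Filter

lemma round_nearest' (x : ℝ) (p : ℤ) : |x - round x| ≤ |x - (p : ℝ)| := by
  rcases eq_or_ne p (round x) with h | h
  · rw [h]
  · have h1 : (1 : ℝ) ≤ |(p : ℝ) - (round x : ℝ)| := by
      have h0 : p - round x ≠ 0 := sub_ne_zero.mpr h
      have := Int.one_le_abs h0
      exact_mod_cast (by push_cast; exact_mod_cast this : (1:ℝ) ≤ |((p - round x : ℤ) : ℝ)|)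
    have h2 := abs_sub_round x
    have h3 : |(p : ℝ) - (round x : ℝ)| ≤ |x - (p:ℝ)| + |x - (round x : ℝ)| := by
      calc |(p : ℝ) - (round x : ℝ)| = |(x - (round x:ℝ)) - (x - (p:ℝ))| := by ring_nf
        _ ≤ |x - (round x:ℝ)| + |x - (p:ℝ)| := abs_sub _ _
        _ = _ := by ring
    linarith

lemma norm_pos' (θ : ℝ) (hθ : Irrational θ) {n : ℕ} (hn : 1 ≤ n) :
    0 < |(n : ℝ) * θ - round ((n:ℝ) * θ)| := by
  rw [abs_pos, sub_ne_zero]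
  exact (hθ.natCast_mul (by omega)).ne_int _

set_option maxHeartbeats 1000000 in
lemma upper_aux (θ : ℝ) (hθ : Irrational θ) (γ : ℝ)
    (hev : ∀ᶠ t : ℝ in atTop, ∃ p q : ℤ, 1 ≤ q ∧ (q : ℝ) ≤ t ∧
      (q : ℝ) * |(q : ℝ) * θ - (p : ℝ)| ≤ t ^ (1 - γ)) : γ ≤ 2 := by
  by_contra hγ
  push_neg at hγ
  classical
  obtain ⟨T₁, hT₁⟩ := eventually_atTop.mp hev
  set T₀ : ℝ := max (max T₁ 1) (3 ^ (1/(γ-2))) with hT₀def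
  have hT₀1 : (1:ℝ) ≤ T₀ := le_trans (le_max_right _ _) (le_max_left _ _)
  have hT₁T₀ : T₁ ≤ T₀ := le_trans (le_max_left _ _) (le_max_left _ _)
  have h3T₀ : (3:ℝ) ^ (1/(γ-2)) ≤ T₀ := le_max_right _ _
  clear_value T₀
  set Q₀ : ℕ := ⌈T₀⌉₊ with hQ₀def
  have hQ₀1 : 1 ≤ Q₀ := Nat.one_le_ceil_iff.mpr (by linarith)
  have hQ₀T₀ : T₀ ≤ (Q₀:ℝ) := Nat.le_ceil T₀
  clear_value Q₀
  obtain ⟨qm, hqm_mem, hqm_min⟩ := (Finset.Icc 1 Q₀).exists_min_image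
    (fun q => |(q:ℝ)*θ - round ((q:ℝ)*θ)|) ⟨1, by simp [hQ₀1]⟩
  rw [Finset.mem_Icc] at hqm_mem
  set ε := |(qm:ℝ)*θ - round ((qm:ℝ)*θ)| with hεdef
  have hε0 : 0 < ε := norm_pos' θ hθ hqm_mem.1
  obtain ⟨n, hn⟩ := exists_nat_gt (1/ε)
  have hnpos : 0 < n := by
    have h01 : 0 < 1/ε := by positivity
    exact_mod_cast lt_of_lt_of_le (by exact_mod_cast h01.trans hn) le_rfl
  obtain ⟨j, k, hk0, hkn, hjk⟩ := Real.exists_int_int_abs_mul_sub_le θ hnpos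
  have hPk : 1 ≤ k.toNat ∧ |((k.toNat:ℕ):ℝ)*θ - round (((k.toNat:ℕ):ℝ)*θ)| < ε := by
    have hcast : ((k.toNat : ℕ) : ℝ) = (k : ℝ) := by
      exact_mod_cast congrArg (Int.cast : ℤ → ℝ) (Int.toNat_of_nonneg hk0.le)
    refine ⟨by omega, ?_⟩
    rw [hcast]
    calc |(k:ℝ)*θ - round ((k:ℝ)*θ)| ≤ |(k:ℝ)*θ - (j:ℝ)| := round_nearest' _ _
      _ ≤ 1/(n+1) := hjk
      _ < ε := by
          rw [div_lt_iff₀ (by positivity)]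
          rw [div_lt_iff₀ hε0] at hn
          nlinarith
  have hex : ∃ m : ℕ, 1 ≤ m ∧ |(m:ℝ)*θ - round ((m:ℝ)*θ)| < ε := ⟨k.toNat, hPk⟩
  set Q₁ : ℕ := Nat.find hex with hQ₁def
  have hspec := Nat.find_spec hex
  rw [← hQ₁def] at hspec
  obtain ⟨hQ₁1, hQ₁ε⟩ := hspec
  have hmin : ∀ m : ℕ, 1 ≤ m → m < Q₁ → ε ≤ |(m:ℝ)*θ - round ((m:ℝ)*θ)| := by
    intro m hm1 hmQ
    by_contra hc
    exact Nat.find_min hex hmQ ⟨hm1, by linarith⟩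
  have hQ₀Q₁ : Q₀ < Q₁ := by
    by_contra hc
    push_neg at hc
    have := hqm_min Q₁ (Finset.mem_Icc.mpr ⟨hQ₁1, hc⟩)
    linarith
  clear hQ₁def
  clear_value Q₁
  -- determinant argument: 1 < 2 Q₁ ε
  set pm : ℤ := round ((qm:ℝ)*θ) with hpmdef
  set p1 : ℤ := round ((Q₁:ℝ)*θ) with hp1def
  set e1 := |(Q₁:ℝ)*θ - (p1:ℝ)| with he1def
  have he1ε : e1 < ε := hQ₁ε
  have he1nn : 0 ≤ e1 := abs_nonneg _
  have hQ₁pos : (0:ℝ) < Q₁ := by exact_mod_cast hQ₁1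
  have hqmQ₁ : (qm:ℝ) ≤ (Q₁:ℝ) := by exact_mod_cast le_of_lt (lt_of_le_of_lt hqm_mem.2 hQ₀Q₁)
  have hqm1 : (1:ℝ) ≤ (qm:ℝ) := by exact_mod_cast hqm_mem.1
  have hqmnn : (0:ℝ) ≤ (qm:ℝ) := by linarith
  have hD : (Q₁:ℤ)*pm - (qm:ℤ)*p1 ≠ 0 := by
    intro h
    have hcast : (Q₁:ℝ)*(pm:ℝ) = (qm:ℝ)*(p1:ℝ) := by
      exact_mod_cast congrArg (Int.cast : ℤ → ℝ) (sub_eq_zero.mp h)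
    have heq : (qm:ℝ)*((Q₁:ℝ)*θ - p1) = (Q₁:ℝ)*((qm:ℝ)*θ - pm) := by linear_combination hcast
    have habs : (qm:ℝ)*e1 = (Q₁:ℝ)*ε := by
      have h2 := congrArg abs heq
      rwa [abs_mul, abs_mul, abs_of_nonneg hqmnn, abs_of_nonneg hQ₁pos.le] at h2
    nlinarith [mul_le_mul_of_nonneg_right hqmQ₁ he1nn, mul_lt_mul_of_pos_left he1ε hQ₁pos]
  have h1D : (1:ℝ) ≤ |(((Q₁:ℤ)*pm - (qm:ℤ)*p1 : ℤ) : ℝ)| := by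
    exact_mod_cast Int.one_le_abs hD
  have hDle : |(((Q₁:ℤ)*pm - (qm:ℤ)*p1 : ℤ) : ℝ)| ≤ (Q₁:ℝ)*ε + (qm:ℝ)*e1 := by
    have hid : (((Q₁:ℤ)*pm - (qm:ℤ)*p1 : ℤ) : ℝ) =
        (Q₁:ℝ)*((pm:ℝ) - (qm:ℝ)*θ) + (qm:ℝ)*((Q₁:ℝ)*θ - (p1:ℝ)) := by push_cast; ring
    rw [hid]
    calc |(Q₁:ℝ)*((pm:ℝ) - (qm:ℝ)*θ) + (qm:ℝ)*((Q₁:ℝ)*θ - (p1:ℝ))|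
        ≤ |(Q₁:ℝ)*((pm:ℝ) - (qm:ℝ)*θ)| + |(qm:ℝ)*((Q₁:ℝ)*θ - (p1:ℝ))| := abs_add_le _ _
      _ = |(Q₁:ℝ)| * |(pm:ℝ) - (qm:ℝ)*θ| + |(qm:ℝ)| * e1 := by rw [abs_mul, abs_mul]
      _ = (Q₁:ℝ)*ε + (qm:ℝ)*e1 := by
          rw [abs_of_nonneg hQ₁pos.le, abs_of_nonneg hqmnn, abs_sub_comm]
  have hkey : 1 < 2*(Q₁:ℝ)*ε := by
    nlinarith [mul_le_mul_of_nonneg_right hqmQ₁ he1nn, mul_lt_mul_of_pos_left he1ε hQ₁pos]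
  -- choose t = Q₁ - 1/2
  set t : ℝ := (Q₁:ℝ) - 1/2 with htdef
  clear_value t
  have hQ₀Q₁' : (Q₀:ℝ) + 1 ≤ (Q₁:ℝ) := by exact_mod_cast hQ₀Q₁
  have htT₀ : T₀ + 1/2 ≤ t := by rw [htdef]; linarith
  have htT₁ : T₁ ≤ t := by linarith
  obtain ⟨p, q, hq1, hqt, hBound⟩ := hT₁ t htT₁
  have hqQ₁ : q < (Q₁:ℤ) := by
    have : (q:ℝ) < (Q₁:ℝ) := by rw [htdef] at hqt; linarith
    exact_mod_cast this
  have hq1n : 1 ≤ q.toNat := by omega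
  have hqQ₁n : q.toNat < Q₁ := by omega
  have hqcast : ((q.toNat : ℕ) : ℝ) = (q:ℝ) := by
    exact_mod_cast congrArg (Int.cast : ℤ → ℝ) (Int.toNat_of_nonneg (by omega))
  have hlow : ε ≤ |(q:ℝ)*θ - round ((q:ℝ)*θ)| := by
    have := hmin q.toNat hq1n hqQ₁n
    rwa [hqcast] at this
  have hq1R : (1:ℝ) ≤ (q:ℝ) := by exact_mod_cast hq1
  have hεt : ε ≤ t ^ (1-γ) := by
    calc ε ≤ |(q:ℝ)*θ - round ((q:ℝ)*θ)| := hlow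
      _ ≤ |(q:ℝ)*θ - (p:ℝ)| := round_nearest' _ _
      _ ≤ (q:ℝ) * |(q:ℝ)*θ - (p:ℝ)| := le_mul_of_one_le_left (abs_nonneg _) hq1R
      _ ≤ t ^ (1-γ) := hBound
  -- but t^(1-γ) ≤ 1/(2 Q₁)
  have ht1 : (1:ℝ) ≤ t := by linarith
  have ht0 : (0:ℝ) < t := by linarith
  have hγ2 : (0:ℝ) < γ - 2 := by linarith
  have h3t : (3:ℝ) ≤ t ^ (γ-2) := by
    have hb : (3:ℝ) ^ (1/(γ-2)) ≤ t := by linarith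
    have hbnn : (0:ℝ) ≤ (3:ℝ) ^ (1/(γ-2)) := Real.rpow_nonneg (by norm_num) _
    calc (3:ℝ) = ((3:ℝ) ^ (1/(γ-2))) ^ (γ-2) := by
          rw [← Real.rpow_mul (by norm_num), one_div_mul_cancel (by linarith), Real.rpow_one]
      _ ≤ t ^ (γ-2) := Real.rpow_le_rpow hbnn hb hγ2.le
  have htpow : 2*(Q₁:ℝ) ≤ t ^ (γ-1) := by
    have hsplit : t ^ (γ-1) = t ^ (γ-2) * t := by
      rw [show γ - 1 = (γ-2) + 1 by ring, Real.rpow_add ht0, Real.rpow_one]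
    rw [hsplit]
    have h3 := mul_le_mul_of_nonneg_right h3t ht0.le
    have hQ₁2 : (2:ℝ) ≤ (Q₁:ℝ) := by linarith
    rw [htdef] at h3 ⊢
    linarith
  have hfinal : t ^ (1-γ) ≤ 1/(2*(Q₁:ℝ)) := by
    rw [show (1:ℝ) - γ = -(γ-1) by ring, Real.rpow_neg ht0.le, one_div]
    exact inv_anti₀ (by positivity) htpow
  have hcon : ε * (2*(Q₁:ℝ)) ≤ 1 := (le_div_iff₀ (by positivity)).mp (hεt.trans hfinal)
  nlinarith

open Filter

/-- The weak uniform Diophantine exponent of a real number `θ`: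
the supremum (in `EReal`) of real `γ` such that for every sufficiently large `t`
there are integers `p`, `q` with `1 ≤ q ≤ t` and `q·|qθ − p| ≤ t^(1−γ)`. -/
noncomputable def weakUniformExp (θ : ℝ) : EReal :=
  sSup {g : EReal | ∃ γ : ℝ, g = (γ : EReal) ∧
    ∀ᶠ t : ℝ in atTop, ∃ p q : ℤ, 1 ≤ q ∧ (q : ℝ) ≤ t ∧
      (q : ℝ) * |(q : ℝ) * θ - (p : ℝ)| ≤ t ^ (1 - γ)}

/-- If `θ` is irrational, then `1 ≤ ω̂̂(θ) ≤ 2`. -/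
theorem one_le_weakUniformExp_le_two (θ : ℝ) (hθ : Irrational θ) :
    1 ≤ weakUniformExp θ ∧ weakUniformExp θ ≤ 2 := by
  constructor
  · apply le_sSup
    refine ⟨1, by norm_num, ?_⟩
    filter_upwards [eventually_ge_atTop (2 : ℝ)] with t ht
    have ht0 : (0:ℝ) < t := by linarith
    set n : ℕ := ⌊t⌋₊ with hn
    have hn2 : 2 ≤ n := Nat.le_floor ht
    have hnpos : 0 < n := by omega
    obtain ⟨j, k, hk0, hkn, hjk⟩ := Real.exists_int_int_abs_mul_sub_le θ hnpos
    refine ⟨j, k, hk0, ?_, ?_⟩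
    · calc (k : ℝ) ≤ n := by exact_mod_cast hkn
        _ ≤ t := Nat.floor_le ht0.le
    · have h1 : (k : ℝ) * |(k:ℝ) * θ - j| ≤ (n : ℝ) * (1 / (n+1)) :=
        mul_le_mul (by exact_mod_cast hkn) hjk (abs_nonneg _) (by positivity)
      have h2 : (n : ℝ) * (1 / (n+1)) ≤ 1 := by
        rw [mul_one_div, div_le_one (by positivity)]; linarith
      have h3 : t ^ (1 - (1:ℝ)) = 1 := by norm_num
      rw [h3]; linarith
  · apply sSup_le
    rintro g ⟨γ, rfl, hev⟩
    have h := upper_aux θ hθ γ hev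
    rw [show (2:EReal) = ((2:ℝ) : EReal) by rfl]
    exact EReal.coe_le_coe_iff.mpr h
end

section
/- If θ > 1 is irrational, then 0 ≤ ω̂̂(Λ_θ) ≤ 1/2. -/
open Filter

/-- sup-norm of a point of `ℝ²`. -/
noncomputable def latNorm (z : ℝ × ℝ) : ℝ := max |z.1| |z.2|

/-- `Π(z) = (|z₁|·|z₂|)^(1/2)`. -/
noncomputable def latProd (z : ℝ × ℝ) : ℝ := (|z.1| * |z.2|) ^ ((1 : ℝ) / 2)

/-- The lattice `Λ_θ = {(θq − p, q + θp) : (q, p) ∈ ℤ²}`. -/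
def latticeOf (θ : ℝ) : Set (ℝ × ℝ) :=
  {z | ∃ q p : ℤ, z = (θ * (q : ℝ) - (p : ℝ), (q : ℝ) + θ * (p : ℝ))}

/-- The weak uniform Diophantine exponent of a lattice `Λ ⊆ ℝ²`:
the supremum (in `EReal`) of real `γ` such that for every sufficiently large `t`
there is a nonzero `z ∈ Λ` with `|z| ≤ t` and `Π(z) ≤ t^(−γ)`. -/
noncomputable def weakUniformExpLat (Λ : Set (ℝ × ℝ)) : EReal :=
  sSup {g : EReal | ∃ γ : ℝ, g = (γ : EReal) ∧
    ∀ᶠ t : ℝ in atTop, ∃ z ∈ Λ, z ≠ 0 ∧ latNorm z ≤ t ∧ latProd z ≤ t ^ (-γ)}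

lemma latNorm_pair (x y : ℝ) : latNorm (x, y) = max |x| |y| := rfl

lemma latProd_pair (x y : ℝ) : latProd (x, y) = Real.sqrt (|x| * |y|) :=
  (Real.sqrt_eq_rpow _).symm

lemma sq_ident (θ : ℝ) (q p : ℤ) :
    (θ * (q:ℝ) - (p:ℝ))^2 + ((q:ℝ) + θ * (p:ℝ))^2 = (θ^2+1) * ((q:ℝ)^2 + (p:ℝ)^2) := by
  ring

lemma coord_ne {θ : ℝ} (hθ : Irrational θ) {q p : ℤ} (h : ¬(q = 0 ∧ p = 0)) :
    θ * (q:ℝ) - (p:ℝ) ≠ 0 ∧ (q:ℝ) + θ * (p:ℝ) ≠ 0 := by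
  have hir := (irrational_iff_ne_rational θ).mp hθ
  constructor
  · intro h0
    rcases eq_or_ne q 0 with hq | hq
    · subst hq
      have : (p:ℝ) = 0 := by push_cast at h0; linarith
      exact h ⟨rfl, by exact_mod_cast this⟩
    · refine hir p q hq ?_
      have hq' : (q:ℝ) ≠ 0 := Int.cast_ne_zero.mpr hq
      field_simp
      linarith
  · intro h0
    rcases eq_or_ne p 0 with hp | hp
    · subst hp
      have : (q:ℝ) = 0 := by push_cast at h0; linarith
      exact h ⟨by exact_mod_cast this, rfl⟩
    · refine hir (-q) p hp ?_
      have hp' : (p:ℝ) ≠ 0 := Int.cast_ne_zero.mpr hp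
      push_cast
      field_simp
      linarith

lemma one_le_qsq {q p : ℤ} (h : ¬(q = 0 ∧ p = 0)) :
    (1:ℝ) ≤ (q:ℝ)^2 + (p:ℝ)^2 := by
  have : (1:ℤ) ≤ q^2 + p^2 := by
    rcases not_and_or.mp h with hq | hq
    · nlinarith [Int.one_le_abs hq, sq_abs q, sq_nonneg p, abs_nonneg q]
    · nlinarith [Int.one_le_abs hq, sq_abs p, sq_nonneg q, abs_nonneg p]
  exact_mod_cast this

lemma rep_ne_zero {θ : ℝ} (hθ : Irrational θ) {q p : ℤ} (h : ¬(q = 0 ∧ p = 0)) :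
    ((θ * (q:ℝ) - (p:ℝ), (q:ℝ) + θ * (p:ℝ)) : ℝ × ℝ) ≠ 0 := by
  intro hz
  rw [Prod.ext_iff] at hz
  exact (coord_ne hθ h).1 hz.1

lemma ne_zero_rep {θ : ℝ} {q p : ℤ}
    (hz : ((θ * (q:ℝ) - (p:ℝ), (q:ℝ) + θ * (p:ℝ)) : ℝ × ℝ) ≠ 0) : ¬(q = 0 ∧ p = 0) := by
  rintro ⟨rfl, rfl⟩
  apply hz
  simp [Prod.ext_iff]

lemma eucl_lb {θ : ℝ} (hθ1 : 1 < θ) {q p : ℤ} (h : ¬(q = 0 ∧ p = 0)) :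
    θ^2 + 1 ≤ (θ * (q:ℝ) - (p:ℝ))^2 + ((q:ℝ) + θ * (p:ℝ))^2 := by
  have h1 := one_le_qsq h
  have h2 := sq_ident θ q p
  nlinarith [sq_nonneg θ]

lemma norm_one_le {θ : ℝ} (hθ1 : 1 < θ) {q p : ℤ} (h : ¬(q = 0 ∧ p = 0)) :
    1 ≤ latNorm (θ * (q:ℝ) - (p:ℝ), (q:ℝ) + θ * (p:ℝ)) := by
  rw [latNorm_pair]
  have h1 := eucl_lb hθ1 h
  have hx : |θ * (q:ℝ) - (p:ℝ)| ≤ max |θ * (q:ℝ) - (p:ℝ)| |(q:ℝ) + θ * (p:ℝ)| := le_max_left _ _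
  have hy : |(q:ℝ) + θ * (p:ℝ)| ≤ max |θ * (q:ℝ) - (p:ℝ)| |(q:ℝ) + θ * (p:ℝ)| := le_max_right _ _
  have h0 : (0:ℝ) ≤ max |θ * (q:ℝ) - (p:ℝ)| |(q:ℝ) + θ * (p:ℝ)| :=
    le_trans (abs_nonneg _) hx
  nlinarith [mul_self_le_mul_self (abs_nonneg (θ * (q:ℝ) - (p:ℝ))) hx,
    mul_self_le_mul_self (abs_nonneg ((q:ℝ) + θ * (p:ℝ))) hy,
    abs_mul_abs_self (θ * (q:ℝ) - (p:ℝ)), abs_mul_abs_self ((q:ℝ) + θ * (p:ℝ)),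
    sq_nonneg (θ - 1), sq_nonneg θ]

lemma pairing (θ : ℝ) (q p q' p' : ℤ) : ∃ m n : ℤ,
    (θ * (q:ℝ) - (p:ℝ)) * ((q':ℝ) + θ * (p':ℝ)) -
      ((q:ℝ) + θ * (p:ℝ)) * (θ * (q':ℝ) - (p':ℝ)) = (θ^2+1) * (m:ℝ) ∧
    (θ * (q:ℝ) - (p:ℝ)) * (θ * (q':ℝ) - (p':ℝ)) +
      ((q:ℝ) + θ * (p:ℝ)) * ((q':ℝ) + θ * (p':ℝ)) = (θ^2+1) * (n:ℝ) :=
  ⟨q * p' - p * q', q * q' + p * p', by push_cast; ring, by push_cast; ring⟩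

lemma box_lb {θ : ℝ} (hθ1 : 1 < θ) (hθ : Irrational θ) (N : ℝ) :
    ∃ δ > 0, ∀ z ∈ latticeOf θ, z ≠ 0 → latNorm z ≤ N → δ ≤ latProd z := by
  set B : ℤ := max 1 ⌈N⌉ with hB
  have hB1 : 1 ≤ B := le_max_left _ _
  set F : Finset (ℤ × ℤ) := ((Finset.Icc (-B) B) ×ˢ (Finset.Icc (-B) B)).erase (0, 0) with hF
  have hne : F.Nonempty := by
    refine ⟨(1, 0), ?_⟩
    simp only [hF, Finset.mem_erase, Finset.mem_product, Finset.mem_Icc]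
    refine ⟨by simp, ⟨by omega, by omega⟩, by omega, by omega⟩
  set f : ℤ × ℤ → ℝ := fun qp => latProd (θ * (qp.1:ℝ) - (qp.2:ℝ), (qp.1:ℝ) + θ * (qp.2:ℝ))
    with hf
  refine ⟨F.inf' hne f, ?_, ?_⟩
  · rw [gt_iff_lt, Finset.lt_inf'_iff]
    rintro ⟨q, p⟩ hqp
    have hne0 : ¬(q = 0 ∧ p = 0) := by
      rintro ⟨rfl, rfl⟩
      simp [hF, Finset.mem_erase] at hqp
    obtain ⟨h1, h2⟩ := coord_ne hθ hne0
    have hpos : 0 < |θ * (q:ℝ) - (p:ℝ)| * |(q:ℝ) + θ * (p:ℝ)| :=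
      mul_pos (abs_pos.2 h1) (abs_pos.2 h2)
    simp only [hf]
    rw [latProd_pair]
    exact Real.sqrt_pos.mpr hpos
  · rintro z ⟨q, p, rfl⟩ hz hN
    have hqp0 : ¬(q = 0 ∧ p = 0) := ne_zero_rep hz
    have hN1 : (1:ℝ) ≤ N := le_trans (norm_one_le hθ1 hqp0) hN
    have hBN : N ≤ (B:ℝ) := by
      calc N ≤ (⌈N⌉ : ℝ) := Int.le_ceil N
      _ ≤ (B:ℝ) := by exact_mod_cast le_max_right 1 ⌈N⌉
    -- bounds on q, p
    have hx : |θ * (q:ℝ) - (p:ℝ)| ≤ N := le_trans (le_max_left _ _) hN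
    have hy : |(q:ℝ) + θ * (p:ℝ)| ≤ N := le_trans (le_max_right _ _) hN
    have hid := sq_ident θ q p
    have hqq : (q:ℝ)^2 + (p:ℝ)^2 ≤ N^2 := by
      nlinarith [abs_mul_abs_self (θ * (q:ℝ) - (p:ℝ)), abs_mul_abs_self ((q:ℝ) + θ * (p:ℝ)),
        abs_nonneg (θ * (q:ℝ) - (p:ℝ)), abs_nonneg ((q:ℝ) + θ * (p:ℝ)),
        sq_nonneg (θ - 1), sq_nonneg ((q:ℝ)), sq_nonneg ((p:ℝ)),
        mul_self_le_mul_self (abs_nonneg (θ * (q:ℝ) - (p:ℝ))) hx,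
        mul_self_le_mul_self (abs_nonneg ((q:ℝ) + θ * (p:ℝ))) hy]
    have hqB : q^2 + p^2 ≤ B^2 := by
      have : (q:ℝ)^2 + (p:ℝ)^2 ≤ (B:ℝ)^2 := le_trans hqq (by nlinarith)
      exact_mod_cast this
    have hmem : (q, p) ∈ F := by
      simp only [hF, Finset.mem_erase, Finset.mem_product, Finset.mem_Icc]
      refine ⟨?_, ⟨by nlinarith, by nlinarith⟩, by nlinarith, by nlinarith⟩
      intro hqp
      rw [Prod.mk.injEq] at hqp
      exact hqp0 ⟨hqp.1, hqp.2⟩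
    exact Finset.inf'_le f hmem

lemma core_ne {θ : ℝ} (hθ1 : 1 < θ) {V : ℝ} {m : ℤ} (hV : V = (θ^2+1) * (m:ℝ))
    (hV0 : V ≠ 0) : θ^2 + 1 ≤ |V| := by
  have hm : m ≠ 0 := by
    rintro rfl
    simp at hV
    exact hV0 hV
  have h1 : (1:ℝ) ≤ |(m:ℝ)| := by
    have := Int.one_le_abs hm
    calc (1:ℝ) ≤ (|m| : ℤ) := by exact_mod_cast this
    _ = |(m:ℝ)| := by push_cast; ring
  have hpos : (0:ℝ) < θ^2 + 1 := by positivity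
  rw [hV, abs_mul, abs_of_pos hpos]
  nlinarith

lemma core {θ : ℝ} (hθ1 : 1 < θ) {x y x' y' : ℝ} {m n : ℤ}
    (hD : x * y' - y * x' = (θ^2+1) * (m:ℝ)) (hS : x * x' + y * y' = (θ^2+1) * (n:ℝ))
    (hP1 : max |x'| |y'| * min |x| |y| ≤ 1/2)
    (hP2 : max |x| |y| * min |x'| |y'| ≤ 1) :
    x * y' - y * x' = 0 ∨ x * x' + y * y' = 0 := by
  have habs : ∀ u v u' v' : ℝ, |u * v' - v * u'| ≤ |u| * |v'| + |v| * |u'| := by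
    intro u v u' v'
    calc |u * v' - v * u'| ≤ |u * v'| + |v * u'| := abs_sub _ _
    _ = |u| * |v'| + |v| * |u'| := by rw [abs_mul, abs_mul]
  have habs' : ∀ u v u' v' : ℝ, |u * u' + v * v'| ≤ |u| * |u'| + |v| * |v'| := by
    intro u v u' v'
    calc |u * u' + v * v'| ≤ |u * u'| + |v * v'| := abs_add_le _ _
    _ = |u| * |u'| + |v| * |v'| := by rw [abs_mul, abs_mul]
  rcases le_total |x| |y| with hx | hx <;> rcases le_total |x'| |y'| with hx' | hx'
  · -- min z = |x|, max w = |y'| : use D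
    left
    by_contra hV0
    have hb := core_ne hθ1 hD hV0
    have h1 : |x| * |y'| ≤ 1/2 := by
      rw [max_eq_right hx', min_eq_left hx] at hP1; linarith [hP1]
    have h2 : |y| * |x'| ≤ 1 := by
      rw [max_eq_right hx, min_eq_left hx'] at hP2; linarith [hP2]
    have h3 := habs x y x' y'
    nlinarith [sq_nonneg (θ-1)]
  · -- min z = |x|, min w = |y'| : use S
    right
    by_contra hV0
    have hb := core_ne hθ1 hS hV0
    have h1 : |x| * |x'| ≤ 1/2 := by
      rw [max_eq_left hx', min_eq_left hx] at hP1; linarith [hP1]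
    have h2 : |y| * |y'| ≤ 1 := by
      rw [max_eq_right hx, min_eq_right hx'] at hP2; linarith [hP2]
    have h3 := habs' x y x' y'
    nlinarith [sq_nonneg (θ-1)]
  · -- min z = |y|, max w = |y'| : use S
    right
    by_contra hV0
    have hb := core_ne hθ1 hS hV0
    have h1 : |y| * |y'| ≤ 1/2 := by
      rw [max_eq_right hx', min_eq_right hx] at hP1; linarith [hP1]
    have h2 : |x| * |x'| ≤ 1 := by
      rw [max_eq_left hx, min_eq_left hx'] at hP2; linarith [hP2]
    have h3 := habs' x y x' y'
    nlinarith [sq_nonneg (θ-1)]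
  · -- min z = |y|, min w = |y'| : use D
    left
    by_contra hV0
    have hb := core_ne hθ1 hD hV0
    have h1 : |y| * |x'| ≤ 1/2 := by
      rw [max_eq_left hx', min_eq_right hx] at hP1; linarith [hP1]
    have h2 : |x| * |y'| ≤ 1 := by
      rw [max_eq_left hx, min_eq_right hx'] at hP2; linarith [hP2]
    have h3 := habs x y x' y'
    nlinarith [sq_nonneg (θ-1)]

set_option maxHeartbeats 1000000 in
lemma upper {θ : ℝ} (hθ1 : 1 < θ) (hθ : Irrational θ) {γ : ℝ} (hγ : 1/2 < γ)
    (hev : ∀ᶠ t : ℝ in atTop, ∃ z ∈ latticeOf θ, z ≠ 0 ∧ latNorm z ≤ t ∧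
      latProd z ≤ t ^ (-γ)) : False := by
  obtain ⟨T₀, hT₀⟩ := eventually_atTop.mp hev
  set T : ℝ := max T₀ 1 with hTdef
  have hT1 : (1:ℝ) ≤ T := le_max_right _ _
  have hT : ∀ t : ℝ, T ≤ t → ∃ z ∈ latticeOf θ, z ≠ 0 ∧ latNorm z ≤ t ∧
      latProd z ≤ t ^ (-γ) := fun t ht => hT₀ t (le_trans (le_max_left _ _) ht)
  set ε : ℝ := 2*γ - 1 with hεdef
  have hε : 0 < ε := by simp only [hεdef]; linarith
  set A : ℝ := 2 * (2:ℝ) ^ (1/ε) with hAdef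
  have h2e : (1:ℝ) ≤ (2:ℝ) ^ (1/ε) := by
    rw [show (1:ℝ) = (2:ℝ) ^ (0:ℝ) by rw [Real.rpow_zero]]
    exact Real.rpow_le_rpow_of_exponent_le (by norm_num) (by positivity)
  set N : ℝ := max A (2*T) with hNdef
  obtain ⟨δ, hδ, hbox⟩ := box_lb hθ1 hθ N
  have h1 : ∀ᶠ t : ℝ in atTop, t ^ (-γ) < δ :=
    (tendsto_rpow_neg_atTop (by linarith : (0:ℝ) < γ)).eventually (gt_mem_nhds hδ)
  obtain ⟨t, htT, htδ⟩ := ((eventually_ge_atTop T).and h1).exists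
  have ht1 : (1:ℝ) ≤ t := le_trans hT1 htT
  have ht0 : (0:ℝ) < t := by linarith
  -- minimal witness at scale t
  set PS : Set ℕ := {mm : ℕ | ∃ q p : ℤ, ¬(q = 0 ∧ p = 0) ∧
    latNorm (θ * (q:ℝ) - (p:ℝ), (q:ℝ) + θ * (p:ℝ)) ≤ t ∧
    latProd (θ * (q:ℝ) - (p:ℝ), (q:ℝ) + θ * (p:ℝ)) ≤ t ^ (-γ) ∧
    (mm:ℤ) = q^2 + p^2} with hPS
  have hPSne : PS.Nonempty := by
    obtain ⟨z, ⟨q, p, rfl⟩, hz0, hzn, hzp⟩ := hT t htT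
    exact ⟨(q^2+p^2).toNat, q, p, ne_zero_rep hz0, hzn, hzp,
      Int.toNat_of_nonneg (by positivity)⟩
  obtain ⟨q, p, hqp0, hzn, hzp, hcast⟩ := Nat.sInf_mem hPSne
  obtain ⟨hz1, hz2⟩ := coord_ne hθ hqp0
  -- abbreviations for coordinates of z
  have hzΛ : ((θ * (q:ℝ) - (p:ℝ), (q:ℝ) + θ * (p:ℝ)) : ℝ × ℝ) ∈ latticeOf θ := ⟨q, p, rfl⟩
  have hz0 : ((θ * (q:ℝ) - (p:ℝ), (q:ℝ) + θ * (p:ℝ)) : ℝ × ℝ) ≠ 0 := rep_ne_zero hθ hqp0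
  have haN : N < latNorm (θ * (q:ℝ) - (p:ℝ), (q:ℝ) + θ * (p:ℝ)) := by
    by_contra hle
    push_neg at hle
    exact absurd (le_trans (hbox _ hzΛ hz0 hle) hzp) (not_le.2 htδ)
  set x : ℝ := θ * (q:ℝ) - (p:ℝ) with hxdef
  set y : ℝ := (q:ℝ) + θ * (p:ℝ) with hydef
  set a : ℝ := latNorm (x, y) with hadef
  have ha1 : 1 ≤ a := norm_one_le hθ1 hqp0
  have haA : A < a := lt_of_le_of_lt (le_max_left _ _) haN
  have haT : 2*T < a := lt_of_le_of_lt (le_max_right _ _) haN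
  have hat : a ≤ t := hzn
  have hs : T ≤ a/2 := by linarith
  -- second witness at scale a/2
  obtain ⟨w, hwΛ, hw0, hwn, hwp⟩ := hT (a/2) hs
  obtain ⟨q', p', rfl⟩ := hwΛ
  have hqp0' : ¬(q' = 0 ∧ p' = 0) := ne_zero_rep hw0
  obtain ⟨hw1, hw2⟩ := coord_ne hθ hqp0'
  set x' : ℝ := θ * (q':ℝ) - (p':ℝ) with hxdef'
  set y' : ℝ := (q':ℝ) + θ * (p':ℝ) with hydef'
  set a' : ℝ := latNorm (x', y') with hadef'
  have ha'1 : 1 ≤ a' := norm_one_le hθ1 hqp0'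
  -- norms and products, unfolded
  have haxy : a = max |x| |y| := latNorm_pair x y
  have haxy' : a' = max |x'| |y'| := latNorm_pair x' y'
  have hax : |x| ≤ a := haxy ▸ le_max_left _ _
  have hay : |y| ≤ a := haxy ▸ le_max_right _ _
  have hax' : |x'| ≤ a' := haxy' ▸ le_max_left _ _
  have hay' : |y'| ≤ a' := haxy' ▸ le_max_right _ _
  have hzp' : Real.sqrt (|x| * |y|) ≤ t ^ (-γ) := by rw [← latProd_pair]; exact hzp
  have hwp' : Real.sqrt (|x'| * |y'|) ≤ (a/2) ^ (-γ) := by rw [← latProd_pair]; exact hwp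
  have hs1 : (1:ℝ) ≤ a/2 := by linarith [h2e]
  have hs0 : (0:ℝ) < a/2 := by linarith
  -- product bounds
  have hsqle : ∀ u v : ℝ, 0 < u → 0 ≤ v → Real.sqrt v ≤ u ^ (-γ) → v ≤ u ^ (-(2*γ)) := by
    intro u v hu hv hvu
    have h2 : u ^ (-(2*γ)) = (u ^ (-γ))^2 := by
      rw [show -(2*γ) = (-γ) * 2 by ring, Real.rpow_mul hu.le]
      norm_num
    rw [h2]
    calc v = (Real.sqrt v)^2 := (Real.sq_sqrt hv).symm
    _ ≤ (u ^ (-γ))^2 := pow_le_pow_left₀ (Real.sqrt_nonneg v) hvu 2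
  have hzprod : |x| * |y| ≤ t ^ (-(2*γ)) :=
    hsqle t _ ht0 (by positivity) hzp'
  have hwprod : |x'| * |y'| ≤ (a/2) ^ (-(2*γ)) :=
    hsqle (a/2) _ hs0 (by positivity) hwp'
  have ht2γ : t ^ (-(2*γ)) ≤ 1 := Real.rpow_le_one_of_one_le_of_nonpos ht1 (by linarith)
  -- hP1 : a' * min |x| |y| ≤ 1/2
  have hminmax : max |x| |y| * min |x| |y| = |x| * |y| := by
    rcases le_total |x| |y| with h | h
    · rw [max_eq_right h, min_eq_left h]; ring
    · rw [max_eq_left h, min_eq_right h]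
  have hminmax' : max |x'| |y'| * min |x'| |y'| = |x'| * |y'| := by
    rcases le_total |x'| |y'| with h | h
    · rw [max_eq_right h, min_eq_left h]; ring
    · rw [max_eq_left h, min_eq_right h]
  have hmin0 : 0 ≤ min |x| |y| := le_min (abs_nonneg _) (abs_nonneg _)
  have hmin0' : 0 ≤ min |x'| |y'| := le_min (abs_nonneg _) (abs_nonneg _)
  have hP1 : max |x'| |y'| * min |x| |y| ≤ 1/2 := by
    have hb : a * min |x| |y| ≤ 1 := by
      rw [← haxy] at hminmax
      rw [hminmax]; linarith
    have hw2 : max |x'| |y'| ≤ a/2 := by rw [← haxy']; exact hwn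
    have := mul_le_mul_of_nonneg_right hw2 hmin0
    linarith
  -- hP2 : a * min |x'| |y'| ≤ 1
  have hP2 : max |x| |y| * min |x'| |y'| ≤ 1 := by
    have hb' : min |x'| |y'| ≤ (a/2) ^ (-(2*γ)) := by
      have h1 : min |x'| |y'| ≤ min |x'| |y'| * max |x'| |y'| := by
        have hmax1 : (1:ℝ) ≤ max |x'| |y'| := haxy' ▸ ha'1
        calc min |x'| |y'| = min |x'| |y'| * 1 := (mul_one _).symm
        _ ≤ min |x'| |y'| * max |x'| |y'| := mul_le_mul_of_nonneg_left hmax1 hmin0'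
      rw [mul_comm] at h1
      rw [hminmax'] at h1
      linarith
    -- a * (a/2)^(-(2γ)) ≤ 1
    have hu : (2:ℝ) ^ (1/ε) ≤ a/2 := by simp only [hAdef] at haA; linarith
    have hu0 : (0:ℝ) < a/2 := hs0
    have h2u : (2:ℝ) ≤ (a/2) ^ ε := by
      calc (2:ℝ) = (2:ℝ) ^ ((1/ε) * ε) := by
            rw [one_div, inv_mul_cancel₀ hε.ne', Real.rpow_one]
      _ = ((2:ℝ) ^ (1/ε)) ^ ε := Real.rpow_mul (by norm_num) _ _
      _ ≤ (a/2) ^ ε := Real.rpow_le_rpow (by positivity) hu hε.le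
    have hsplit : (a/2) ^ (-(2*γ)) = ((a/2) ^ ε)⁻¹ * (a/2)⁻¹ := by
      rw [show -(2*γ) = (-ε) + (-1) by simp only [hεdef]; ring, Real.rpow_add hu0,
        Real.rpow_neg_one, Real.rpow_neg hu0.le]
    have hinv : ((a/2) ^ ε)⁻¹ ≤ 2⁻¹ := by
      apply inv_anti₀ (by norm_num) h2u
    have hkey : a * (a/2) ^ (-(2*γ)) ≤ 1 := by
      rw [hsplit]
      have hhalf : (0:ℝ) < ((a/2) ^ ε)⁻¹ := by positivity
      calc a * (((a/2) ^ ε)⁻¹ * (a/2)⁻¹) = (a * (a/2)⁻¹) * ((a/2) ^ ε)⁻¹ := by ring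
      _ = 2 * ((a/2) ^ ε)⁻¹ := by
          rw [show a * (a/2)⁻¹ = 2 from by field_simp]
      _ ≤ 2 * 2⁻¹ := by linarith
      _ = 1 := by norm_num
    calc max |x| |y| * min |x'| |y'| = a * min |x'| |y'| := by rw [haxy]
    _ ≤ a * ((a/2) ^ (-(2*γ))) :=
        mul_le_mul_of_nonneg_left hb' (by linarith)
    _ ≤ 1 := hkey
  -- pairing
  obtain ⟨m, n, hDm, hSn⟩ := pairing θ q p q' p'
  rw [← hxdef, ← hydef, ← hxdef', ← hydef'] at hDm hSn
  have hcases := core hθ1 hDm hSn hP1 hP2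
  -- descent: contradiction with minimality
  have hdesc : ∀ μ : ℝ, (x'^2 + y'^2 = μ^2 * (x^2 + y^2)) →
      (|x'| * |y'| = μ^2 * (|x| * |y|)) → False := by
    intro μ hsq habs2
    have hEz : θ^2 + 1 ≤ x^2 + y^2 := eucl_lb hθ1 hqp0
    have hEzid : x^2 + y^2 = (θ^2+1) * ((q:ℝ)^2 + (p:ℝ)^2) := sq_ident θ q p
    have hEwid : x'^2 + y'^2 = (θ^2+1) * ((q':ℝ)^2 + (p':ℝ)^2) := sq_ident θ q' p'
    have hEpos : (0:ℝ) < x^2 + y^2 := by linarith [sq_nonneg θ]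
    have haE : a^2 ≤ x^2 + y^2 := by
      rcases le_total |x| |y| with h | h
      · rw [haxy, max_eq_right h]
        linarith [sq_abs y, sq_nonneg x]
      · rw [haxy, max_eq_left h]
        linarith [sq_abs x, sq_nonneg y]
    have hwa : x'^2 + y'^2 ≤ 2 * (a/2)^2 := by
      have h1 : |x'| ≤ a/2 := le_trans hax' hwn
      have h2 : |y'| ≤ a/2 := le_trans hay' hwn
      have hx'sq : x'^2 ≤ (a/2)^2 := by
        rw [← sq_abs]; exact pow_le_pow_left₀ (abs_nonneg _) h1 2
      have hy'sq : y'^2 ≤ (a/2)^2 := by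
        rw [← sq_abs]; exact pow_le_pow_left₀ (abs_nonneg _) h2 2
      linarith
    have hμ : μ^2 ≤ 1/2 := by
      have hhalfsq : 2 * (a/2)^2 = a^2/2 := by ring
      have h1 : μ^2 * (x^2+y^2) ≤ (1/2) * (x^2+y^2) := by
        rw [← hsq]
        linarith [hwa, hhalfsq, haE]
      exact le_of_mul_le_mul_right (by linarith) hEpos
    -- strictly smaller integer norm
    have hQ : (q':ℝ)^2 + (p':ℝ)^2 = μ^2 * ((q:ℝ)^2 + (p:ℝ)^2) := by
      have hpos : (0:ℝ) < θ^2 + 1 := by positivity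
      apply mul_left_cancel₀ hpos.ne'
      linear_combination -hEwid + hsq + μ^2 * hEzid
    have h1q : (1:ℝ) ≤ (q:ℝ)^2 + (p:ℝ)^2 := one_le_qsq hqp0
    have hqlt : (q':ℝ)^2 + (p':ℝ)^2 < (q:ℝ)^2 + (p:ℝ)^2 := by
      have := mul_le_mul_of_nonneg_right hμ (by linarith : (0:ℝ) ≤ (q:ℝ)^2 + (p:ℝ)^2)
      linarith
    -- w is a witness at scale t with smaller integer norm
    have hwn2 : latNorm (x', y') ≤ t := by
      calc latNorm (x', y') ≤ a/2 := hwn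
      _ ≤ t := by linarith
    have hwp2 : latProd (x', y') ≤ t ^ (-γ) := by
      rw [latProd_pair]
      calc Real.sqrt (|x'| * |y'|) ≤ Real.sqrt (|x| * |y|) := by
            apply Real.sqrt_le_sqrt
            rw [habs2]
            have h0 : (0:ℝ) ≤ |x| * |y| := mul_nonneg (abs_nonneg x) (abs_nonneg y)
            have := mul_le_mul_of_nonneg_right (by linarith : μ^2 ≤ 1) h0
            linarith
      _ ≤ t ^ (-γ) := hzp'
    have hmem : (q'^2 + p'^2).toNat ∈ PS := by
      refine ⟨q', p', hqp0', ?_, ?_, Int.toNat_of_nonneg (by positivity)⟩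
      · rw [← hxdef', ← hydef']; exact hwn2
      · rw [← hxdef', ← hydef']; exact hwp2
    have hle := Nat.sInf_le hmem
    have hint : q'^2 + p'^2 < q^2 + p^2 := by exact_mod_cast hqlt
    have htn : ((q'^2 + p'^2).toNat : ℤ) = q'^2 + p'^2 := Int.toNat_of_nonneg (by positivity)
    omega
  rcases hcases with hD0 | hS0
  · -- parallel : x' = μ x, y' = μ y with μ = x'/x
    have hy' : y' = (x'/x) * y := by
      rw [div_mul_eq_mul_div, eq_div_iff hz1]
      linear_combination hD0
    have hx'2 : x' = (x'/x) * x := (div_mul_cancel₀ x' hz1).symm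
    apply hdesc (x'/x)
    · rw [hy']
      nth_rewrite 1 [hx'2]
      ring
    · rw [hy']
      nth_rewrite 1 [hx'2]
      rw [abs_mul, abs_mul]
      calc |x'/x| * |x| * (|x'/x| * |y|) = (|x'/x| * |x'/x|) * (|x| * |y|) := by ring
      _ = (x'/x)^2 * (|x| * |y|) := by rw [abs_mul_abs_self]; ring
  · -- perpendicular : y' = μ x, x' = -μ y with μ = y'/x
    have hx'2 : x' = -((y'/x) * y) := by
      rw [div_mul_eq_mul_div, ← neg_div, eq_div_iff hz1]
      linear_combination hS0
    have hy'2 : y' = (y'/x) * x := (div_mul_cancel₀ y' hz1).symm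
    apply hdesc (y'/x)
    · linear_combination (x' - (y'/x)*y) * hx'2 + (y' + (y'/x)*x) * hy'2
    · rw [hx'2]
      nth_rewrite 2 [hy'2]
      rw [abs_neg, abs_mul, abs_mul]
      calc |y'/x| * |y| * (|y'/x| * |x|) = (|y'/x| * |y'/x|) * (|x| * |y|) := by ring
      _ = (y'/x)^2 * (|x| * |y|) := by rw [abs_mul_abs_self]; ring

/-- If `θ > 1` is irrational, then `0 ≤ ω̂̂(Λ_θ) ≤ 1/2`. -/
theorem weakUniformExpLat_between (θ : ℝ) (hθ1 : 1 < θ) (hθ : Irrational θ) :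
    0 ≤ weakUniformExpLat (latticeOf θ) ∧
    weakUniformExpLat (latticeOf θ) ≤ ((1 / 2 : ℝ) : EReal) := by
  have hθ0 : (0:ℝ) < θ := by linarith
  constructor
  · -- lower bound
    have hkey : ∀ ε : ℝ, 0 < ε →
        ((-ε : ℝ) : EReal) ≤ weakUniformExpLat (latticeOf θ) := by
      intro ε hε
      apply le_sSup
      refine ⟨-ε, rfl, ?_⟩
      rw [eventually_atTop]
      refine ⟨max θ (θ ^ ((1/2)/ε)), fun t ht => ?_⟩
      have htθ : θ ≤ t := le_trans (le_max_left _ _) ht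
      have htr : θ ^ ((1/2)/ε) ≤ t := le_trans (le_max_right _ _) ht
      refine ⟨(θ, 1), ⟨1, 0, by push_cast; norm_num⟩, ?_, ?_, ?_⟩
      · intro h
        rw [Prod.ext_iff] at h
        exact one_ne_zero h.2
      · rw [latNorm_pair, abs_of_pos hθ0, abs_one, max_eq_left hθ1.le]
        exact htθ
      · rw [latProd_pair, abs_of_pos hθ0, abs_one, mul_one, neg_neg,
          Real.sqrt_eq_rpow]
        calc θ ^ ((1:ℝ)/2) = (θ ^ ((1/2)/ε)) ^ ε := by
              rw [← Real.rpow_mul hθ0.le, div_mul_cancel₀ _ hε.ne']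
        _ ≤ t ^ ε := Real.rpow_le_rpow (Real.rpow_nonneg hθ0.le _) htr hε.le
    by_contra hneg
    push_neg at hneg
    obtain ⟨r, hr1, hr2⟩ := EReal.lt_iff_exists_real_btwn.mp hneg
    have hrneg : r < 0 := by exact_mod_cast hr2
    have := hkey (-r) (by linarith)
    rw [neg_neg] at this
    exact absurd this (not_le.2 hr1)
  · -- upper bound
    apply sSup_le
    rintro g ⟨γ, rfl, hevγ⟩
    rw [EReal.coe_le_coe_iff]
    by_contra hg
    push_neg at hg
    exact upper hθ1 hθ hg hevγ
end

section
/- For every irrational θ > 1 one has ω̂̂(Λ_θ) = (ω̂̂(θ) − 1)/2. -/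
open Filter

def Pth (θ γ : ℝ) : Prop :=
  ∀ᶠ t : ℝ in atTop, ∃ p q : ℤ, 1 ≤ q ∧ (q : ℝ) ≤ t ∧
    (q : ℝ) * |(q : ℝ) * θ - (p : ℝ)| ≤ t ^ (1 - γ)

def Qlat (θ γ : ℝ) : Prop :=
  ∀ᶠ t : ℝ in atTop, ∃ z ∈ latticeOf θ, z ≠ 0 ∧ latNorm z ≤ t ∧ latProd z ≤ t ^ (-γ)

lemma Pth_one (θ : ℝ) : Pth θ 1 := by
  filter_upwards [eventually_ge_atTop (1:ℝ)] with t ht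
  have hn : 0 < ⌊t⌋₊ := Nat.floor_pos.mpr ht
  obtain ⟨j, k, hk0, hkn, hjk⟩ := Real.exists_int_int_abs_mul_sub_le θ hn
  refine ⟨j, k, hk0, ?_, ?_⟩
  · have h1 : (k : ℝ) ≤ (⌊t⌋₊ : ℝ) := by exact_mod_cast hkn
    exact h1.trans (Nat.floor_le (by linarith))
  · have hk0' : (0:ℝ) ≤ (k:ℝ) := by exact_mod_cast hk0.le
    have h1 : (k:ℝ) * |(k:ℝ) * θ - j| ≤ (k:ℝ) * (1 / ((⌊t⌋₊:ℝ) + 1)) :=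
      mul_le_mul_of_nonneg_left hjk hk0'
    have h2 : (k:ℝ) * (1 / ((⌊t⌋₊:ℝ) + 1)) ≤ 1 := by
      rw [mul_one_div, div_le_one (by positivity)]
      have : (k : ℝ) ≤ (⌊t⌋₊ : ℝ) := by exact_mod_cast hkn
      linarith
    have h3 : t ^ (1 - (1:ℝ)) = 1 := by norm_num
    rw [h3]; exact h1.trans h2

lemma case_pos (θ : ℝ) (hθ1 : 1 < θ) (q p : ℤ) (hy : 0 < (q:ℝ) + θ * p) :
    ∃ Q P : ℤ, 1 ≤ Q ∧ (Q:ℝ) ≤ max |θ * (q:ℝ) - p| |(q:ℝ) + θ * p| ∧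
      (Q:ℝ) * |(Q:ℝ) * θ - (P:ℝ)| ≤ |θ * (q:ℝ) - p| * |(q:ℝ) + θ * p| := by
  have hy' : |(q:ℝ) + θ * p| = (q:ℝ) + θ * p := abs_of_pos hy
  rcases le_or_gt 1 q with hq | hq
  · have hq' : (1:ℝ) ≤ (q:ℝ) := by exact_mod_cast hq
    rcases le_or_gt 0 p with hp | hp
    · -- Q = q, P = p
      have hp' : (0:ℝ) ≤ (p:ℝ) := by exact_mod_cast hp
      refine ⟨q, p, hq, ?_, ?_⟩
      · refine le_trans ?_ (le_max_right _ _)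
        rw [hy']; nlinarith
      · have h1 : |(q:ℝ) * θ - p| = |θ * q - p| := by rw [mul_comm]
        rw [h1, mul_comm (|θ * (q:ℝ) - p|)]
        apply mul_le_mul_of_nonneg_right _ (abs_nonneg _)
        rw [hy']; nlinarith
    · -- p ≤ -1 : Q = -p, P = q
      have hp1 : p ≤ -1 := by omega
      have hp' : (p:ℝ) ≤ -1 := by exact_mod_cast hp1
      have hx : θ * q - p > 0 := by nlinarith
      have hx' : |θ * (q:ℝ) - p| = θ * q - p := abs_of_pos hx
      refine ⟨-p, q, by omega, ?_, ?_⟩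
      · refine le_trans ?_ (le_max_left _ _)
        push_cast; rw [hx']; nlinarith
      · have h1 : |((-p : ℤ):ℝ) * θ - q| = (q:ℝ) + θ * p := by
          push_cast
          rw [show (-(p:ℝ)) * θ - q = -((q:ℝ) + θ * p) by ring, abs_neg, hy']
        rw [h1, hx', hy']
        push_cast
        apply mul_le_mul_of_nonneg_right _ hy.le
        nlinarith
  · -- q ≤ 0, so p ≥ 1 : Q = p, P = -q
    have hq' : (q:ℝ) ≤ 0 := by exact_mod_cast (by omega : q ≤ 0)
    have hp : 0 < p := by
      by_contra h
      have : (p:ℝ) ≤ 0 := by exact_mod_cast not_lt.mp h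
      nlinarith
    have hp' : (1:ℝ) ≤ (p:ℝ) := by exact_mod_cast hp
    have hx : θ * q - p < 0 := by nlinarith
    have hx' : |θ * (q:ℝ) - p| = -(θ * q - p) := abs_of_neg hx
    refine ⟨p, -q, hp, ?_, ?_⟩
    · refine le_trans ?_ (le_max_left _ _)
      rw [hx']; nlinarith
    · have h1 : |(p:ℝ) * θ - ((-q : ℤ):ℝ)| = (q:ℝ) + θ * p := by
        push_cast
        rw [show (p:ℝ) * θ - -(q:ℝ) = (q:ℝ) + θ * p by ring, hy']
      rw [h1, hx', hy']
      apply mul_le_mul_of_nonneg_right _ hy.le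
      nlinarith


lemma case_all (θ : ℝ) (hθ1 : 1 < θ) (hθ : Irrational θ) (q p : ℤ)
    (hz : ((θ * (q:ℝ) - p, (q:ℝ) + θ * p) : ℝ × ℝ) ≠ 0) :
    ∃ Q P : ℤ, 1 ≤ Q ∧ (Q:ℝ) ≤ max |θ * (q:ℝ) - p| |(q:ℝ) + θ * p| ∧
      (Q:ℝ) * |(Q:ℝ) * θ - (P:ℝ)| ≤ |θ * (q:ℝ) - p| * |(q:ℝ) + θ * p| := by
  rcases lt_trichotomy 0 ((q:ℝ) + θ * p) with hy | hy | hy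
  · exact case_pos θ hθ1 q p hy
  · exfalso
    by_cases hp : p = 0
    · subst hp
      have hq : (q:ℝ) = 0 := by push_cast at hy ⊢; linarith
      apply hz
      rw [Prod.ext_iff]
      constructor
      · show θ * (q:ℝ) - ((0:ℤ):ℝ) = 0
        rw [hq]; push_cast; ring
      · show (q:ℝ) + θ * ((0:ℤ):ℝ) = 0
        rw [hq]; push_cast; ring
    · have hp' : (p:ℝ) ≠ 0 := Int.cast_ne_zero.mpr hp
      apply hθ
      refine ⟨(-q : ℚ)/(p : ℚ), ?_⟩
      push_cast
      field_simp
      linarith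
  · obtain ⟨Q, P, h1, h2, h3⟩ := case_pos θ hθ1 (-q) (-p) (by push_cast; linarith)
    have e1 : |θ * ((-q : ℤ):ℝ) - ((-p:ℤ):ℝ)| = |θ * (q:ℝ) - p| := by
      push_cast
      rw [show θ * (-(q:ℝ)) - (-(p:ℝ)) = -(θ * q - p) by ring, abs_neg]
    have e2 : |((-q : ℤ):ℝ) + θ * ((-p:ℤ):ℝ)| = |(q:ℝ) + θ * p| := by
      push_cast
      rw [show -(q:ℝ) + θ * (-(p:ℝ)) = -((q:ℝ) + θ * p) by ring, abs_neg]
    rw [e1, e2] at h2 h3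
    exact ⟨Q, P, h1, h2, h3⟩

lemma key_B (θ : ℝ) (hθ1 : 1 < θ) (hθ : Irrational θ) {γ : ℝ} (h : Qlat θ γ) :
    Pth θ (2 * γ + 1) := by
  filter_upwards [h, eventually_ge_atTop (1:ℝ)] with t ht ht1
  obtain ⟨z, hzΛ, hz0, hnorm, hprod⟩ := ht
  obtain ⟨q, p, rfl⟩ := hzΛ
  obtain ⟨Q, P, hQ1, hQle, hQbd⟩ := case_all θ hθ1 hθ q p hz0
  have ht0 : (0:ℝ) < t := by linarith
  refine ⟨P, Q, hQ1, ?_, ?_⟩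
  · exact hQle.trans hnorm
  · have hA : (0:ℝ) ≤ |θ * (q:ℝ) - p| * |(q:ℝ) + θ * p| := by positivity
    set z : ℝ × ℝ := (θ * (q:ℝ) - p, (q:ℝ) + θ * p) with hzdef
    have hP0 : 0 ≤ latProd z := Real.rpow_nonneg (by positivity) _
    have hsq : |θ * (q:ℝ) - p| * |(q:ℝ) + θ * p| = latProd z * latProd z := by
      rw [latProd, ← Real.rpow_add' hA (by norm_num)]
      norm_num
    have h2 : latProd z * latProd z ≤ t ^ (-γ) * t ^ (-γ) :=
      mul_le_mul hprod hprod hP0 (Real.rpow_nonneg ht0.le _)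
    have h3 : t ^ (-γ) * t ^ (-γ) = t ^ (1 - (2 * γ + 1)) := by
      rw [← Real.rpow_add ht0]; ring_nf
    calc (Q:ℝ) * |(Q:ℝ) * θ - P| ≤ |θ * (q:ℝ) - p| * |(q:ℝ) + θ * p| := hQbd
      _ = latProd z * latProd z := hsq
      _ ≤ t ^ (-γ) * t ^ (-γ) := h2
      _ = t ^ (1 - (2 * γ + 1)) := h3

lemma key_A (θ : ℝ) (hθ1 : 1 < θ) {γ γ' : ℝ} (hγ : 1 ≤ γ) (hP : Pth θ γ)
    (h' : γ' < (γ - 1) / 2) : Qlat θ γ' := by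
  set C : ℝ := 1 + θ + θ ^ 2 with hCdef
  have hC0 : 0 < C := by nlinarith
  have hC3 : 3 ≤ C := by nlinarith
  have hε : 0 < γ - 1 - 2 * γ' := by linarith
  have E1 : ∀ᶠ t : ℝ in atTop, ∃ p q : ℤ, 1 ≤ q ∧ (q : ℝ) ≤ t / C ∧
      (q : ℝ) * |(q : ℝ) * θ - (p : ℝ)| ≤ (t / C) ^ (1 - γ) :=
    (tendsto_id.atTop_div_const hC0).eventually hP
  have E3 : ∀ᶠ t : ℝ in atTop, C ^ γ ≤ t ^ (γ - 1 - 2 * γ') :=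
    (tendsto_rpow_atTop hε).eventually_ge_atTop _
  filter_upwards [E1, eventually_ge_atTop C, E3] with t hE1 htC hE3
  obtain ⟨p, q, hq1, hqs, hbd⟩ := hE1
  have ht0 : (0:ℝ) < t := lt_of_lt_of_le hC0 htC
  have hs0 : (0:ℝ) < t / C := div_pos ht0 hC0
  have hs1 : (1:ℝ) ≤ t / C := (one_le_div hC0).mpr htC
  have hq1' : (1:ℝ) ≤ (q:ℝ) := by exact_mod_cast hq1
  have habs0 : (0:ℝ) ≤ |(q:ℝ) * θ - p| := abs_nonneg _
  have hr1 : (t / C) ^ (1 - γ) ≤ 1 :=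
    Real.rpow_le_one_of_one_le_of_nonpos hs1 (by linarith)
  have habs : |(q:ℝ) * θ - p| ≤ (t / C) ^ (1 - γ) :=
    le_trans (le_mul_of_one_le_left habs0 hq1') hbd
  have habs1 : |(q:ℝ) * θ - p| ≤ 1 := habs.trans hr1
  obtain ⟨hl, hr⟩ := abs_le.mp habs1
  have hp0 : (0:ℝ) < (p:ℝ) := by nlinarith
  have hy : (0:ℝ) < (q:ℝ) + θ * p := by nlinarith
  have hCs : C * (t / C) = t := by field_simp
  have hyt : (q:ℝ) + θ * p ≤ t := by
    rw [← hCs]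
    nlinarith [hqs, hs1]
  refine ⟨(θ * (q:ℝ) - p, (q:ℝ) + θ * p), ⟨q, p, rfl⟩, ?_, ?_, ?_⟩
  · intro hcon
    rw [Prod.ext_iff] at hcon
    have := hcon.2
    simp only [Prod.snd_zero] at this
    linarith
  · rw [latNorm]
    apply max_le
    · have : |θ * (q:ℝ) - p| = |(q:ℝ) * θ - p| := by rw [mul_comm]
      rw [this]; linarith
    · rw [abs_of_pos hy]; exact hyt
  · -- latProd bound
    have hcore : |θ * (q:ℝ) - p| * |(q:ℝ) + θ * p| ≤ C * (t / C) ^ (1 - γ) := by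
      have e1 : |θ * (q:ℝ) - p| = |(q:ℝ) * θ - p| := by rw [mul_comm]
      rw [e1, abs_of_pos hy]
      have hθ0 : (0:ℝ) < θ := by linarith
      have h1 : (p:ℝ) * |(q:ℝ) * θ - p| ≤ ((q:ℝ) * θ + 1) * |(q:ℝ) * θ - p| :=
        mul_le_mul_of_nonneg_right (by linarith) habs0
      nlinarith [mul_le_mul_of_nonneg_left h1 hθ0.le,
        mul_le_mul_of_nonneg_left hbd (sq_nonneg θ),
        mul_le_mul_of_nonneg_left habs hθ0.le, hbd, habs]
    have e1 : (t / C) ^ (1 - γ) = t ^ (1 - γ) * C ^ (γ - 1) := by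
      rw [Real.div_rpow ht0.le hC0.le, div_eq_mul_inv, ← Real.rpow_neg hC0.le,
        show -(1 - γ) = γ - 1 by ring]
    have e2 : C * ((t : ℝ) ^ (1 - γ) * C ^ (γ - 1)) = t ^ (1 - γ) * C ^ γ := by
      rw [mul_comm C, mul_assoc]
      congr 1
      rw [← Real.rpow_add_one hC0.ne', show (γ - 1) + 1 = γ by ring]
    have e3 : (t : ℝ) ^ (1 - γ) * C ^ γ ≤ t ^ (1 - γ) * t ^ (γ - 1 - 2 * γ') :=
      mul_le_mul_of_nonneg_left hE3 (Real.rpow_nonneg ht0.le _)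
    have e4 : (t : ℝ) ^ (1 - γ) * t ^ (γ - 1 - 2 * γ') = t ^ (-(2 * γ')) := by
      rw [← Real.rpow_add ht0, show (1 - γ) + (γ - 1 - 2 * γ') = -(2 * γ') by ring]
    have hfinal : |θ * (q:ℝ) - p| * |(q:ℝ) + θ * p| ≤ t ^ (-(2 * γ')) := by
      calc |θ * (q:ℝ) - p| * |(q:ℝ) + θ * p| ≤ C * (t / C) ^ (1 - γ) := hcore
        _ = C * ((t : ℝ) ^ (1 - γ) * C ^ (γ - 1)) := by rw [e1]
        _ = t ^ (1 - γ) * C ^ γ := e2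
        _ ≤ t ^ (1 - γ) * t ^ (γ - 1 - 2 * γ') := e3
        _ = t ^ (-(2 * γ')) := e4
    have hA : (0:ℝ) ≤ |θ * (q:ℝ) - p| * |(q:ℝ) + θ * p| := by positivity
    calc latProd (θ * (q:ℝ) - p, (q:ℝ) + θ * p)
        = (|θ * (q:ℝ) - p| * |(q:ℝ) + θ * p|) ^ ((1:ℝ)/2) := rfl
      _ ≤ (t ^ (-(2 * γ'))) ^ ((1:ℝ)/2) := Real.rpow_le_rpow hA hfinal (by norm_num)
      _ = t ^ (-γ') := by
          rw [← Real.rpow_mul ht0.le, show (-(2 * γ')) * ((1:ℝ)/2) = -γ' by ring]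

lemma ecast (x : ℝ) : (((x - 1) / 2 : ℝ) : EReal) = ((x : EReal) - 1) / 2 := by
  rw [EReal.coe_div, EReal.coe_sub, EReal.coe_one]
  norm_cast


/-- For every irrational `θ > 1` one has `ω̂̂(Λ_θ) = (ω̂̂(θ) − 1)/2`. -/
theorem weakUniformExpLat_eq (θ : ℝ) (hθ1 : 1 < θ) (hθ : Irrational θ) :
    weakUniformExpLat (latticeOf θ) = (weakUniformExp θ - 1) / 2 := by
  have h1A : ((1:ℝ) : EReal) ≤ weakUniformExp θ := le_sSup ⟨1, rfl, Pth_one θ⟩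
  apply le_antisymm
  · -- B ≤ (A-1)/2
    apply sSup_le
    rintro g ⟨γ, rfl, hγ⟩
    have h2 : ((2 * γ + 1 : ℝ) : EReal) ≤ weakUniformExp θ :=
      le_sSup ⟨2 * γ + 1, rfl, key_B θ hθ1 hθ hγ⟩
    calc (γ : EReal) = (((2 * γ + 1 - 1) / 2 : ℝ) : EReal) := by norm_num
      _ = (((2 * γ + 1 : ℝ) : EReal) - 1) / 2 := ecast _
      _ ≤ (weakUniformExp θ - 1) / 2 :=
        EReal.div_le_div_right_of_nonneg (by norm_num) (EReal.sub_le_sub h2 le_rfl)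
  · -- (A-1)/2 ≤ B
    by_contra hcon
    rw [not_le] at hcon
    obtain ⟨c, hc1, hc2⟩ := EReal.exists_rat_btwn_of_lt hcon
    set cr : ℝ := (c : ℝ) with hcr
    have hlt : ((2 * cr + 1 : ℝ) : EReal) < weakUniformExp θ := by
      rcases eq_or_ne (weakUniformExp θ) ⊤ with hA | hA
      · rw [hA]; exact EReal.coe_lt_top _
      · have hAb : weakUniformExp θ ≠ ⊥ :=
          fun h => by rw [h] at h1A; exact EReal.coe_ne_bot 1 (le_bot_iff.mp h1A)
        rw [← EReal.coe_toReal hA hAb] at hc2 ⊢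
        rw [← ecast, EReal.coe_lt_coe_iff] at hc2
        rw [EReal.coe_lt_coe_iff]
        linarith
    rw [weakUniformExp] at hlt
    obtain ⟨g, hgmem, hgt⟩ := lt_sSup_iff.mp hlt
    obtain ⟨γ, rfl, hPγ⟩ := hgmem
    rw [EReal.coe_lt_coe_iff] at hgt
    have hPM : Pth θ (max γ 1) := by
      rcases le_total γ 1 with h | h
      · rw [max_eq_right h]; exact Pth_one θ
      · rw [max_eq_left h]; exact hPγ
    have hQ : Qlat θ cr :=
      key_A θ hθ1 (le_max_right γ 1) hPM (by
        have := le_max_left γ 1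
        linarith)
    have hle : ((cr : ℝ) : EReal) ≤ weakUniformExpLat (latticeOf θ) :=
      le_sSup ⟨cr, rfl, hQ⟩
    exact absurd hle (not_le.mpr hc1)
end

section
/- For every irrational θ > 1 one has ω(Λ_θ) = (ω(θ) − 1)/2. -/
open Filter

/-- The regular Diophantine exponent of a real number `θ`:
the supremum (in `EReal`) of real `γ` such that `|θx − y| ≤ |x|^(−γ)` has
infinitely many solutions in nonzero integers `x`, `y`. -/
noncomputable def regularExp (θ : ℝ) : EReal :=
  sSup {g : EReal | ∃ γ : ℝ, g = (γ : EReal) ∧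
    {xy : ℤ × ℤ | xy.1 ≠ 0 ∧ xy.2 ≠ 0 ∧
      |θ * (xy.1 : ℝ) - (xy.2 : ℝ)| ≤ |(xy.1 : ℝ)| ^ (-γ)}.Infinite}

/-- The regular Diophantine exponent of a lattice `Λ ⊆ ℝ²`:
the supremum (in `EReal`) of real `γ` such that `Π(z) ≤ |z|^(−γ)` has
infinitely many solutions in nonzero `z ∈ Λ`. -/
noncomputable def regularExpLat (Λ : Set (ℝ × ℝ)) : EReal :=
  sSup {g : EReal | ∃ γ : ℝ, g = (γ : EReal) ∧
    {z : ℝ × ℝ | z ∈ Λ ∧ z ≠ 0 ∧ latProd z ≤ (latNorm z) ^ (-γ)}.Infinite}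

namespace RegAux

/-- the parametrization of the lattice -/
def F (θ : ℝ) (qp : ℤ × ℤ) : ℝ × ℝ :=
  (θ * (qp.1 : ℝ) - (qp.2 : ℝ), (qp.1 : ℝ) + θ * (qp.2 : ℝ))

lemma F_mem (θ : ℝ) (qp : ℤ × ℤ) : F θ qp ∈ latticeOf θ := ⟨qp.1, qp.2, rfl⟩

lemma F_inj {θ : ℝ} (hθ1 : 1 < θ) : Function.Injective (F θ) := by
  rintro ⟨q, p⟩ ⟨q', p'⟩ h
  rw [F, F, Prod.ext_iff] at h
  obtain ⟨h1, h2⟩ := h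
  simp only at h1 h2
  have hpos : (0:ℝ) < θ ^ 2 + 1 := by positivity
  have hq : ((θ:ℝ) ^ 2 + 1) * ((q : ℝ) - q') = 0 := by linear_combination θ * h1 + h2
  have hp : ((θ:ℝ) ^ 2 + 1) * ((p : ℝ) - p') = 0 := by linear_combination θ * h2 - h1
  have hq' : (q : ℝ) = q' := by
    have := mul_eq_zero.1 hq
    rcases this with h | h
    · linarith
    · linarith
  have hp' : (p : ℝ) = p' := by
    have := mul_eq_zero.1 hp
    rcases this with h | h
    · linarith
    · linarith
  have : q = q' := by exact_mod_cast hq'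
  have : p = p' := by exact_mod_cast hp'
  simp_all

lemma recover_q (θ : ℝ) (qp : ℤ × ℤ) :
    ((θ:ℝ) ^ 2 + 1) * (qp.1 : ℝ) = θ * (F θ qp).1 + (F θ qp).2 := by
  simp only [F]; ring

lemma recover_p (θ : ℝ) (qp : ℤ × ℤ) :
    ((θ:ℝ) ^ 2 + 1) * (qp.2 : ℝ) = θ * (F θ qp).2 - (F θ qp).1 := by
  simp only [F]; ring

lemma F_ne_zero {θ : ℝ} {qp : ℤ × ℤ} (h : F θ qp = 0) : qp = 0 := by
  have h1 : (F θ qp).1 = 0 := by rw [h]; rfl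
  have h2 : (F θ qp).2 = 0 := by rw [h]; rfl
  have hpos : (0:ℝ) < θ ^ 2 + 1 := by positivity
  have hq := recover_q θ qp
  have hp := recover_p θ qp
  rw [h1, h2] at hq hp
  have hq' : (qp.1 : ℝ) = 0 := by
    rcases mul_eq_zero.1 (by linarith : ((θ:ℝ)^2+1) * (qp.1:ℝ) = 0) with h | h
    · linarith
    · exact h
  have hp' : (qp.2 : ℝ) = 0 := by
    rcases mul_eq_zero.1 (by linarith : ((θ:ℝ)^2+1) * (qp.2:ℝ) = 0) with h | h
    · linarith
    · exact h
  have : qp.1 = 0 := by exact_mod_cast hq'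
  have : qp.2 = 0 := by exact_mod_cast hp'
  exact Prod.ext ‹qp.1 = 0› ‹qp.2 = 0›

lemma norm_lower {θ : ℝ} (hθ1 : 1 < θ) (qp : ℤ × ℤ) :
    max |(qp.1 : ℝ)| |(qp.2 : ℝ)| ≤ latNorm (F θ qp) := by
  set z := F θ qp with hz
  have hN1 : |z.1| ≤ latNorm z := le_max_left _ _
  have hN2 : |z.2| ≤ latNorm z := le_max_right _ _
  have hθ0 : (0:ℝ) < θ := by linarith
  have hq : ((θ:ℝ)^2+1) * |(qp.1 : ℝ)| ≤ (θ^2+1) * latNorm z := by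
    calc ((θ:ℝ)^2+1) * |(qp.1 : ℝ)| = |((θ:ℝ)^2+1)| * |(qp.1 : ℝ)| := by
          rw [abs_of_pos (show (0:ℝ) < θ^2+1 by positivity)]
      _ = |((θ:ℝ)^2+1) * (qp.1 : ℝ)| := (abs_mul _ _).symm
      _ = |θ * z.1 + z.2| := by rw [recover_q]
      _ ≤ θ * |z.1| + |z.2| := by
          refine (abs_add_le _ _).trans ?_
          rw [abs_mul, abs_of_pos hθ0]
      _ ≤ θ * latNorm z + latNorm z := by
          have := mul_le_mul_of_nonneg_left hN1 hθ0.le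
          linarith
      _ ≤ (θ^2+1) * latNorm z := by
          have hN0 : 0 ≤ latNorm z := (abs_nonneg z.1).trans hN1
          nlinarith [mul_nonneg (show (0:ℝ) ≤ θ^2 - θ by nlinarith) hN0]
  have hp : ((θ:ℝ)^2+1) * |(qp.2 : ℝ)| ≤ (θ^2+1) * latNorm z := by
    calc ((θ:ℝ)^2+1) * |(qp.2 : ℝ)| = |((θ:ℝ)^2+1)| * |(qp.2 : ℝ)| := by
          rw [abs_of_pos (show (0:ℝ) < θ^2+1 by positivity)]
      _ = |((θ:ℝ)^2+1) * (qp.2 : ℝ)| := (abs_mul _ _).symm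
      _ = |θ * z.2 - z.1| := by rw [recover_p]
      _ ≤ θ * |z.2| + |z.1| := by
          refine (abs_sub _ _).trans ?_
          rw [abs_mul, abs_of_pos hθ0]
      _ ≤ θ * latNorm z + latNorm z := by
          have := mul_le_mul_of_nonneg_left hN2 hθ0.le
          linarith
      _ ≤ (θ^2+1) * latNorm z := by
          have hN0 : 0 ≤ latNorm z := (abs_nonneg z.1).trans hN1
          nlinarith [mul_nonneg (show (0:ℝ) ≤ θ^2 - θ by nlinarith) hN0]
  have hposs : (0:ℝ) < θ^2+1 := by positivity
  rw [max_le_iff]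
  constructor
  · exact le_of_mul_le_mul_left hq hposs
  · exact le_of_mul_le_mul_left hp hposs

lemma norm_upper {θ : ℝ} (hθ1 : 1 < θ) (qp : ℤ × ℤ) :
    latNorm (F θ qp) ≤ 2 * θ * max |(qp.1 : ℝ)| |(qp.2 : ℝ)| := by
  have hθ0 : (0:ℝ) < θ := by linarith
  have h1 : |(qp.1 : ℝ)| ≤ max |(qp.1 : ℝ)| |(qp.2 : ℝ)| := le_max_left _ _
  have h2 : |(qp.2 : ℝ)| ≤ max |(qp.1 : ℝ)| |(qp.2 : ℝ)| := le_max_right _ _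
  have hM : 0 ≤ max |(qp.1 : ℝ)| |(qp.2 : ℝ)| := le_trans (abs_nonneg _) h1
  rw [latNorm, max_le_iff]
  constructor
  · calc |(F θ qp).1| = |θ * (qp.1:ℝ) - qp.2| := rfl
      _ ≤ θ * |(qp.1:ℝ)| + |(qp.2:ℝ)| := by
          refine (abs_sub _ _).trans ?_
          rw [abs_mul, abs_of_pos hθ0]
      _ ≤ 2 * θ * max |(qp.1 : ℝ)| |(qp.2 : ℝ)| := by nlinarith
  · calc |(F θ qp).2| = |(qp.1:ℝ) + θ * qp.2| := rfl
      _ ≤ |(qp.1:ℝ)| + θ * |(qp.2:ℝ)| := by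
          refine (abs_add_le _ _).trans ?_
          rw [abs_mul, abs_of_pos hθ0]
      _ ≤ 2 * θ * max |(qp.1 : ℝ)| |(qp.2 : ℝ)| := by nlinarith

lemma small_coord {δ m M : ℝ} (hm : 0 ≤ m) (hM : 1 ≤ M)
    (h : (m * M) ^ ((1:ℝ)/2) ≤ M ^ (-δ)) : m ≤ M ^ (-(2*δ+1)) := by
  have hM0 : (0:ℝ) < M := lt_of_lt_of_le one_pos hM
  have h2 := Real.rpow_le_rpow (Real.rpow_nonneg (by positivity) _) h (by norm_num : (0:ℝ) ≤ 2)
  rw [← Real.rpow_mul (by positivity : (0:ℝ) ≤ m*M), ← Real.rpow_mul (le_of_lt hM0)] at h2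
  norm_num at h2
  have h3 : M ^ (-(2*δ+1)) * M = M ^ (-δ*2) := by
    rw [← Real.rpow_add_one (ne_of_gt hM0)]
    congr 1; ring
  have h4 : m * M ≤ M ^ (-(2*δ+1)) * M := by
    rw [h3]
    convert h2 using 2
    ring
  exact le_of_mul_le_mul_right h4 hM0


lemma one_le_max {qp : ℤ × ℤ} (h : qp ≠ 0) : (1:ℝ) ≤ max |(qp.1 : ℝ)| |(qp.2 : ℝ)| := by
  rcases Prod.mk.injEq .. ▸ (fun h' : qp.1 = 0 ∧ qp.2 = 0 => h (Prod.ext h'.1 h'.2)) with _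
  by_cases h1 : qp.1 = 0
  · have h2 : qp.2 ≠ 0 := by
      intro h2; exact h (Prod.ext h1 h2)
    have : (1:ℝ) ≤ |(qp.2 : ℝ)| := by
      rw [← Int.cast_abs]; exact_mod_cast Int.one_le_abs h2
    exact le_max_of_le_right this
  · have : (1:ℝ) ≤ |(qp.1 : ℝ)| := by
      rw [← Int.cast_abs]; exact_mod_cast Int.one_le_abs h1
    exact le_max_of_le_left this

lemma latToTheta {θ : ℝ} (hθ1 : 1 < θ) {δ : ℝ} (hδ : 0 ≤ δ)
    (h : {z : ℝ × ℝ | z ∈ latticeOf θ ∧ z ≠ 0 ∧ latProd z ≤ (latNorm z) ^ (-δ)}.Infinite) :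
    {xy : ℤ × ℤ | xy.1 ≠ 0 ∧ xy.2 ≠ 0 ∧
      |θ * (xy.1 : ℝ) - (xy.2 : ℝ)| ≤ |(xy.1 : ℝ)| ^ (-(2*δ+1))}.Infinite := by
  have hθ0 : (0:ℝ) < θ := by linarith
  set S : Set (ℤ × ℤ) :=
    {qp | F θ qp ≠ 0 ∧ latProd (F θ qp) ≤ (latNorm (F θ qp)) ^ (-δ)} with hSdef
  have hsub : {z : ℝ × ℝ | z ∈ latticeOf θ ∧ z ≠ 0 ∧ latProd z ≤ (latNorm z) ^ (-δ)}
      ⊆ F θ '' S := by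
    rintro z ⟨⟨q, p, rfl⟩, hz0, hzP⟩
    exact ⟨(q, p), ⟨hz0, hzP⟩, rfl⟩
  have hS : S.Infinite := Set.Infinite.of_image _ (h.mono hsub)
  -- split according to which coordinate is small
  have hunion : S = (S ∩ {qp | |(F θ qp).1| ≤ |(F θ qp).2|})
      ∪ (S ∩ {qp | ¬ |(F θ qp).1| ≤ |(F θ qp).2|}) := by
    ext qp
    constructor
    · intro h'
      by_cases hc : |(F θ qp).1| ≤ |(F θ qp).2|
      · exact Or.inl ⟨h', hc⟩
      · exact Or.inr ⟨h', hc⟩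
    · rintro (⟨h', _⟩ | ⟨h', _⟩) <;> exact h'
  rw [hunion] at hS
  have hcases : (S ∩ {qp | |(F θ qp).1| ≤ |(F θ qp).2|}).Infinite ∨
      (S ∩ {qp | ¬ |(F θ qp).1| ≤ |(F θ qp).2|}).Infinite := by
    by_contra hcon
    obtain ⟨h1, h2⟩ := not_or.1 hcon
    rw [Set.not_infinite] at h1 h2
    exact hS (h1.union h2)
  rcases hcases with hinf | hinf
  · -- case |z₁| ≤ |z₂| : (q, p) itself is a good approximation
    refine hinf.mono ?_
    rintro ⟨q, p⟩ ⟨⟨hne, hP⟩, hc⟩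
    simp only [Set.mem_setOf_eq] at hc ⊢
    set z := F θ (q, p) with hzdef
    have h0 : (q, p) ≠ (0 : ℤ × ℤ) := fun h' => hne (by rw [hzdef, h']; simp [F])
    have hN1 : (1:ℝ) ≤ latNorm z := le_trans (one_le_max h0) (norm_lower hθ1 (q, p))
    have hNz : latNorm z = |z.2| := max_eq_right hc
    have h21 : (1:ℝ) ≤ |z.2| := hNz ▸ hN1
    have hsmall : |z.1| ≤ |z.2| ^ (-(2*δ+1)) := by
      rw [latProd, hNz] at hP
      exact small_coord (abs_nonneg _) h21 hP
    have hq0 : q ≠ 0 := by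
      intro hq
      subst hq
      have hz1 : z.1 = -(p:ℝ) := by simp [hzdef, F]
      have hz2 : z.2 = θ * (p:ℝ) := by simp [hzdef, F]
      have hp0 : p ≠ 0 := fun hp => h0 (by rw [hp]; rfl)
      have hp1 : (1:ℝ) ≤ |(p:ℝ)| := by
        rw [← Int.cast_abs]; exact_mod_cast Int.one_le_abs hp0
      have h2gt : (1:ℝ) < |z.2| := by
        rw [hz2, abs_mul, abs_of_pos hθ0]
        nlinarith
      have : |z.2| ^ (-(2*δ+1)) < 1 :=
        Real.rpow_lt_one_of_one_lt_of_neg h2gt (by linarith)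
      rw [hz1, abs_neg] at hsmall
      linarith
    have hp0 : p ≠ 0 := by
      intro hp
      subst hp
      have hz1 : z.1 = θ * (q:ℝ) := by simp [hzdef, F]
      have hz2 : z.2 = (q:ℝ) := by simp [hzdef, F]
      have hq1 : (1:ℝ) ≤ |(q:ℝ)| := by
        rw [← Int.cast_abs]; exact_mod_cast Int.one_le_abs hq0
      rw [hz1, hz2, abs_mul, abs_of_pos hθ0] at hc
      nlinarith
    refine ⟨hq0, hp0, ?_⟩
    have hq1 : (1:ℝ) ≤ |(q:ℝ)| := by
      rw [← Int.cast_abs]; exact_mod_cast Int.one_le_abs hq0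
    have hqN : |(q:ℝ)| ≤ |z.2| := by
      rw [← hNz]
      exact le_trans (le_max_left _ _) (norm_lower hθ1 (q, p))
    calc |θ * (q:ℝ) - (p:ℝ)| = |z.1| := rfl
      _ ≤ |z.2| ^ (-(2*δ+1)) := hsmall
      _ ≤ |(q:ℝ)| ^ (-(2*δ+1)) :=
          Real.rpow_le_rpow_of_nonpos (by linarith) hqN (by linarith)
  · -- case |z₂| < |z₁| : (p, -q) is a good approximation
    have himg := hinf.image (f := fun qp : ℤ × ℤ => (qp.2, -qp.1))
      (Set.injOn_of_injective (fun a b hab => by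
        have h1 : a.2 = b.2 := congrArg Prod.fst hab
        have h2 : -a.1 = -b.1 := congrArg Prod.snd hab
        exact Prod.ext (neg_injective h2) h1))
    refine himg.mono ?_
    rintro xy ⟨⟨q, p⟩, ⟨⟨hne, hP⟩, hc⟩, rfl⟩
    simp only [Set.mem_setOf_eq, not_le] at hc ⊢
    set z := F θ (q, p) with hzdef
    have h0 : (q, p) ≠ (0 : ℤ × ℤ) := fun h' => hne (by rw [hzdef, h']; simp [F])
    have hN1 : (1:ℝ) ≤ latNorm z := le_trans (one_le_max h0) (norm_lower hθ1 (q, p))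
    have hNz : latNorm z = |z.1| := max_eq_left hc.le
    have h11 : (1:ℝ) ≤ |z.1| := hNz ▸ hN1
    have hsmall : |z.2| ≤ |z.1| ^ (-(2*δ+1)) := by
      rw [latProd, hNz, mul_comm] at hP
      exact small_coord (abs_nonneg _) h11 hP
    have hp0 : p ≠ 0 := by
      intro hp
      subst hp
      have hz1 : z.1 = θ * (q:ℝ) := by simp [hzdef, F]
      have hz2 : z.2 = (q:ℝ) := by simp [hzdef, F]
      have hq0 : q ≠ 0 := fun hq => h0 (by rw [hq]; rfl)
      have hq1 : (1:ℝ) ≤ |(q:ℝ)| := by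
        rw [← Int.cast_abs]; exact_mod_cast Int.one_le_abs hq0
      have h1gt : (1:ℝ) < |z.1| := by
        rw [hz1, abs_mul, abs_of_pos hθ0]
        nlinarith
      have : |z.1| ^ (-(2*δ+1)) < 1 :=
        Real.rpow_lt_one_of_one_lt_of_neg h1gt (by linarith)
      rw [hz2] at hsmall
      linarith
    have hq0 : q ≠ 0 := by
      intro hq
      subst hq
      have hz1 : z.1 = -(p:ℝ) := by simp [hzdef, F]
      have hz2 : z.2 = θ * (p:ℝ) := by simp [hzdef, F]
      have hp1 : (1:ℝ) ≤ |(p:ℝ)| := by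
        rw [← Int.cast_abs]; exact_mod_cast Int.one_le_abs hp0
      rw [hz1, hz2, abs_neg, abs_mul, abs_of_pos hθ0] at hc
      nlinarith
    refine ⟨hp0, neg_ne_zero.mpr hq0, ?_⟩
    have hp1 : (1:ℝ) ≤ |(p:ℝ)| := by
      rw [← Int.cast_abs]; exact_mod_cast Int.one_le_abs hp0
    have hpN : |(p:ℝ)| ≤ |z.1| := by
      rw [← hNz]
      exact le_trans (le_max_right _ _) (norm_lower hθ1 (q, p))
    have habs : |θ * (p:ℝ) - ((-q : ℤ):ℝ)| = |z.2| := by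
      push_cast
      rw [show θ * (p:ℝ) - -(q:ℝ) = (q:ℝ) + θ * p by ring]
      rfl
    calc |θ * (p:ℝ) - ((-q : ℤ):ℝ)| = |z.2| := habs
      _ ≤ |z.1| ^ (-(2*δ+1)) := hsmall
      _ ≤ |(p:ℝ)| ^ (-(2*δ+1)) :=
          Real.rpow_le_rpow_of_nonpos (by linarith) hpN (by linarith)

lemma dirichlet {θ : ℝ} (hθ1 : 1 < θ) (hθ : Irrational θ) :
    {xy : ℤ × ℤ | xy.1 ≠ 0 ∧ xy.2 ≠ 0 ∧
      |θ * (xy.1 : ℝ) - (xy.2 : ℝ)| ≤ |(xy.1 : ℝ)| ^ (-(1:ℝ))}.Infinite := by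
  have h := Real.infinite_rat_abs_sub_lt_one_div_den_sq_of_irrational hθ
  have himg := h.image (f := fun r : ℚ => ((r.den : ℤ), r.num))
    (Set.injOn_of_injective (fun a b hab => by
      have h1 : (a.den : ℤ) = b.den := congrArg Prod.fst hab
      have h2 : a.num = b.num := congrArg Prod.snd hab
      exact Rat.ext h2 (by exact_mod_cast h1)))
  refine himg.mono ?_
  rintro xy ⟨r, hr, rfl⟩
  simp only [Set.mem_setOf_eq] at hr ⊢
  have hd0 : 0 < r.den := r.pos
  have hdR : (0:ℝ) < (r.den : ℝ) := by exact_mod_cast hd0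
  have hd1 : (1:ℝ) ≤ (r.den : ℝ) := by exact_mod_cast hd0
  have hcast : (r : ℝ) = (r.num : ℝ) / (r.den : ℝ) := Rat.cast_def r
  have hkey : θ * ((r.den : ℤ) : ℝ) - (r.num : ℝ) = (r.den : ℝ) * (θ - (r : ℝ)) := by
    rw [hcast]; push_cast; field_simp
  -- r > 0
  have hden2 : (1:ℝ) / (r.den : ℝ) ^ 2 ≤ 1 := by
    rw [div_le_one (by positivity)]
    nlinarith
  have hrpos : (0:ℝ) < (r : ℝ) := by
    have := abs_lt.1 hr
    linarith [this.1, this.2]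
  have hnum : 0 < r.num := by
    rw [Rat.num_pos]
    exact_mod_cast hrpos
  refine ⟨by positivity, by positivity, ?_⟩
  have habs : |θ * ((r.den : ℤ) : ℝ) - (r.num : ℝ)| = (r.den : ℝ) * |θ - (r : ℝ)| := by
    rw [hkey, abs_mul, abs_of_pos hdR]
  have hlt : (r.den : ℝ) * |θ - (r : ℝ)| ≤ (r.den : ℝ) * (1 / (r.den : ℝ) ^ 2) :=
    mul_le_mul_of_nonneg_left (le_of_lt hr) hdR.le
  have heq2 : (r.den : ℝ) * (1 / (r.den : ℝ) ^ 2) = ((r.den : ℝ))⁻¹ := by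
    field_simp
  have hfin : |(((r.den : ℤ) : ℝ))| ^ (-(1:ℝ)) = ((r.den : ℝ))⁻¹ := by
    rw [Real.rpow_neg_one]
    congr 1
    rw [abs_of_pos (by exact_mod_cast hd0)]
    push_cast
    rfl
  rw [habs, hfin]
  rw [heq2] at hlt
  exact hlt

lemma thetaToLat {θ : ℝ} (hθ1 : 1 < θ) {γ ε : ℝ} (hγ : 1 ≤ γ) (hε : 0 < ε)
    (h : {xy : ℤ × ℤ | xy.1 ≠ 0 ∧ xy.2 ≠ 0 ∧
      |θ * (xy.1 : ℝ) - (xy.2 : ℝ)| ≤ |(xy.1 : ℝ)| ^ (-γ)}.Infinite) :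
    {z : ℝ × ℝ | z ∈ latticeOf θ ∧ z ≠ 0 ∧
      latProd z ≤ (latNorm z) ^ (-((γ-1)/2 - ε))}.Infinite := by
  have hθ0 : (0:ℝ) < θ := by linarith
  have h4θ : (1:ℝ) ≤ 4*θ^2 := by nlinarith
  set B : ℝ := (4*θ^2) ^ (γ/(2*ε)) with hBdef
  have hB1 : (1:ℝ) ≤ B := by
    have := Real.rpow_le_rpow zero_le_one h4θ (by positivity : (0:ℝ) ≤ γ/(2*ε))
    rwa [Real.one_rpow] at this
  set M : ℤ := ⌈B⌉ with hMdef
  set M' : ℤ := ⌈θ * (B+1) + 1⌉ with hM'def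
  have hbox : (Set.Icc (-M) M ×ˢ Set.Icc (-M') M' : Set (ℤ × ℤ)).Finite :=
    (Set.finite_Icc _ _).prod (Set.finite_Icc _ _)
  have hT' := h.diff hbox
  have himg := hT'.image (f := F θ) (Set.injOn_of_injective (F_inj hθ1))
  refine himg.mono ?_
  rintro z ⟨⟨x, y⟩, ⟨⟨hx0, hy0, happ⟩, hbox'⟩, rfl⟩
  simp only [Set.mem_setOf_eq] at happ hbox' ⊢
  set X : ℝ := |(x:ℝ)| with hXdef
  have hX1 : (1:ℝ) ≤ X := by
    rw [hXdef, ← Int.cast_abs]; exact_mod_cast Int.one_le_abs hx0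
  have hX0 : (0:ℝ) < X := lt_of_lt_of_le one_pos hX1
  -- the approximation is at most 1
  have happ1 : |θ * (x:ℝ) - (y:ℝ)| ≤ 1 :=
    happ.trans (Real.rpow_le_one_of_one_le_of_nonpos hX1 (by linarith))
  have hy : |(y:ℝ)| ≤ θ * X + 1 := by
    have h1 : |(y:ℝ)| - |θ * (x:ℝ)| ≤ |θ * (x:ℝ) - (y:ℝ)| := by
      rw [abs_sub_comm]
      exact abs_sub_abs_le_abs_sub _ _
    rw [abs_mul, abs_of_pos hθ0] at h1
    linarith
  -- |x| must be large
  have hXB : B ≤ X := by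
    by_contra hcon
    push_neg at hcon
    apply hbox'
    have hxM : |x| ≤ M := by
      have hXM : X ≤ (M:ℝ) := le_trans hcon.le (Int.le_ceil B)
      have : ((|x| : ℤ) : ℝ) ≤ ((M : ℤ) : ℝ) := by
        rw [Int.cast_abs]; exact hXM
      exact_mod_cast this
    have hyM : |y| ≤ M' := by
      have hyR : |(y:ℝ)| ≤ (M':ℝ) := by
        have h1 : θ * X + 1 ≤ θ * (B+1) + 1 := by nlinarith
        exact le_trans hy (le_trans h1 (Int.le_ceil _))
      have : ((|y| : ℤ) : ℝ) ≤ ((M' : ℤ) : ℝ) := by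
        rw [Int.cast_abs]; exact hyR
      exact_mod_cast this
    exact ⟨Set.mem_Icc.2 (abs_le.1 hxM), Set.mem_Icc.2 (abs_le.1 hyM)⟩
  -- set up z
  set z := F θ (x, y) with hzdef
  have hzlat : z ∈ latticeOf θ := F_mem θ (x, y)
  have hz0 : z ≠ 0 := fun hz => hx0 (by
    have := F_ne_zero hz
    exact congrArg Prod.fst this)
  set N : ℝ := latNorm z with hNdef
  have hNX : X ≤ N := le_trans (le_max_left _ _) (norm_lower hθ1 (x, y))
  have hN1 : (1:ℝ) ≤ N := le_trans hX1 hNX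
  have hN0 : (0:ℝ) < N := lt_of_lt_of_le one_pos hN1
  have hNup : N ≤ 4*θ^2*X := by
    have h1 : max |(x:ℝ)| |(y:ℝ)| ≤ 2*θ*X := by
      rw [max_le_iff]
      constructor
      · nlinarith
      · nlinarith
    calc N ≤ 2*θ*max |(x:ℝ)| |(y:ℝ)| := norm_upper hθ1 (x, y)
      _ ≤ 2*θ*(2*θ*X) := by nlinarith
      _ = 4*θ^2*X := by ring
  have hz1 : |z.1| ≤ X ^ (-γ) := happ
  have hz2 : |z.2| ≤ N := le_max_right _ _
  -- main exponent computation
  have hX2ε : (4*θ^2) ^ γ ≤ X ^ (2*ε) := by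
    calc (4*θ^2) ^ γ = ((4*θ^2) ^ (γ/(2*ε))) ^ (2*ε) := by
          rw [← Real.rpow_mul (by positivity)]
          congr 1
          field_simp
      _ ≤ X ^ (2*ε) := Real.rpow_le_rpow (by positivity) hXB (by positivity)
  have hpos4γ : (0:ℝ) < (4*θ^2) ^ γ := Real.rpow_pos_of_pos (by positivity) _
  have hone : (1:ℝ) ≤ (4*θ^2) ^ (-γ) * X ^ (2*ε) := by
    rw [Real.rpow_neg (by positivity)]
    calc (1:ℝ) = ((4*θ^2) ^ γ)⁻¹ * (4*θ^2) ^ γ := (inv_mul_cancel₀ hpos4γ.ne').symm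
      _ ≤ ((4*θ^2) ^ γ)⁻¹ * X ^ (2*ε) :=
          mul_le_mul_of_nonneg_left hX2ε (by positivity)
  have key : X ^ (-γ) ≤ N ^ (-γ + 2*ε) := by
    have h2 : (4*θ^2*X) ^ (-γ) ≤ N ^ (-γ) :=
      Real.rpow_le_rpow_of_nonpos hN0 hNup (by linarith)
    have h4 : (4*θ^2*X) ^ (-γ) = (4*θ^2) ^ (-γ) * X ^ (-γ) :=
      Real.mul_rpow (by positivity) (by positivity)
    have h3 : X ^ (2*ε) ≤ N ^ (2*ε) := Real.rpow_le_rpow (by positivity) hNX (by positivity)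
    calc X ^ (-γ) = X ^ (-γ) * 1 := (mul_one _).symm
      _ ≤ X ^ (-γ) * ((4*θ^2) ^ (-γ) * X ^ (2*ε)) :=
          mul_le_mul_of_nonneg_left hone (by positivity)
      _ = ((4*θ^2) ^ (-γ) * X ^ (-γ)) * X ^ (2*ε) := by ring
      _ ≤ N ^ (-γ) * N ^ (2*ε) := by
          apply mul_le_mul (h4 ▸ h2) h3 (by positivity) (by positivity)
      _ = N ^ (-γ + 2*ε) := (Real.rpow_add hN0 _ _).symm
  have hmain : |z.1| * |z.2| ≤ N ^ (-(2*((γ-1)/2 - ε))) := by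
    have e1 : -(2*((γ-1)/2 - ε)) = (-γ + 2*ε) + 1 := by ring
    rw [e1, Real.rpow_add hN0, Real.rpow_one]
    exact mul_le_mul (hz1.trans key) hz2 (abs_nonneg _) (by positivity)
  refine ⟨hzlat, hz0, ?_⟩
  calc latProd z = (|z.1| * |z.2|) ^ ((1:ℝ)/2) := rfl
    _ ≤ (N ^ (-(2*((γ-1)/2 - ε)))) ^ ((1:ℝ)/2) :=
        Real.rpow_le_rpow (by positivity) hmain (by norm_num)
    _ = N ^ (-((γ-1)/2 - ε)) := by
        rw [← Real.rpow_mul hN0.le]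
        congr 1
        ring

end RegAux

/-- For every irrational `θ > 1` one has `ω(Λ_θ) = (ω(θ) − 1)/2`. -/
theorem regularExpLat_eq (θ : ℝ) (hθ1 : 1 < θ) (hθ : Irrational θ) :
    regularExpLat (latticeOf θ) = (regularExp θ - 1) / 2 := by
  have htop : ((⊤:EReal) - 1)/2 = ⊤ := by
    rw [show (1:EReal) = ((1:ℝ):EReal) from rfl, EReal.top_sub_coe]
    exact EReal.top_div_of_pos_ne_top (by norm_num) (EReal.coe_ne_top 2)
  have hW1 : (1:EReal) ≤ regularExp θ := by
    unfold regularExp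
    exact le_sSup ⟨1, EReal.coe_one.symm, RegAux.dirichlet hθ1 hθ⟩
  have hWbot : regularExp θ ≠ ⊥ := fun hb => by
    rw [hb] at hW1
    exact (EReal.coe_ne_bot 1) (by exact_mod_cast le_bot_iff.1 hW1)
  have hLlow : ∀ γ ε : ℝ, 1 ≤ γ → 0 < ε →
      {xy : ℤ × ℤ | xy.1 ≠ 0 ∧ xy.2 ≠ 0 ∧
        |θ * (xy.1 : ℝ) - (xy.2 : ℝ)| ≤ |(xy.1 : ℝ)| ^ (-γ)}.Infinite →
      (((γ-1)/2 - ε : ℝ) : EReal) ≤ regularExpLat (latticeOf θ) := by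
    intro γ ε hγ hε hprop
    unfold regularExpLat
    exact le_sSup ⟨(γ-1)/2 - ε, rfl, RegAux.thetaToLat hθ1 hγ hε hprop⟩
  have hle : regularExpLat (latticeOf θ) ≤ (regularExp θ - 1) / 2 := by
    unfold regularExpLat
    apply sSup_le
    rintro g ⟨δ, rfl, hδ⟩
    rcases le_or_gt 0 δ with hδ0 | hδ0
    · have h2 : ((2*δ+1 : ℝ) : EReal) ≤ regularExp θ := by
        unfold regularExp
        exact le_sSup ⟨2*δ+1, rfl, RegAux.latToTheta hθ1 hδ0 hδ⟩
      by_cases hWtop : regularExp θ = ⊤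
      · rw [hWtop, htop]
        exact le_top
      · obtain ⟨w, hw⟩ : ∃ w : ℝ, regularExp θ = (w : EReal) :=
          ⟨_, (EReal.coe_toReal hWtop hWbot).symm⟩
        rw [hw] at h2 ⊢
        have h2' : 2*δ+1 ≤ w := by exact_mod_cast h2
        have hconv : ((w:EReal) - 1)/2 = (((w-1)/2 : ℝ):EReal) := by norm_cast
        rw [hconv]
        exact_mod_cast (by linarith : δ ≤ (w-1)/2)
    · have h0 : (0:EReal) ≤ (regularExp θ - 1)/2 := by
        apply EReal.div_nonneg _ (by norm_num)
        calc (0:EReal) = (1:EReal) - 1 := by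
              rw [show (1:EReal) = ((1:ℝ):EReal) from rfl, ← EReal.coe_sub]
              norm_num
          _ ≤ regularExp θ - 1 := EReal.sub_le_sub hW1 le_rfl
      refine le_trans ?_ h0
      exact_mod_cast hδ0.le
  have hge : (regularExp θ - 1)/2 ≤ regularExpLat (latticeOf θ) := by
    by_cases hWtop : regularExp θ = ⊤
    · rw [hWtop, htop]
      rw [← EReal.ge_of_forall_gt_iff_ge]
      intro c hc
      have hlt : ((max (2*c+3) 1 : ℝ) : EReal) < regularExp θ := by
        rw [hWtop]
        exact EReal.coe_lt_top _
      unfold regularExp at hlt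
      obtain ⟨g, hgS, hg⟩ := lt_sSup_iff.1 hlt
      obtain ⟨γ, rfl, hγprop⟩ := hgS
      have hγR : max (2*c+3) 1 < γ := by exact_mod_cast hg
      have h1γ : 1 ≤ γ := le_of_lt (lt_of_le_of_lt (le_max_right _ _) hγR)
      refine le_trans ?_ (hLlow γ 1 h1γ one_pos hγprop)
      have h3 : 2*c+3 < γ := lt_of_le_of_lt (le_max_left _ _) hγR
      exact_mod_cast (by linarith : c ≤ (γ-1)/2 - 1)
    · obtain ⟨w, hw⟩ : ∃ w : ℝ, regularExp θ = (w : EReal) :=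
        ⟨_, (EReal.coe_toReal hWtop hWbot).symm⟩
      rw [hw]
      have hconv : ((w:EReal) - 1)/2 = (((w-1)/2 : ℝ):EReal) := by norm_cast
      rw [hconv]
      rw [← EReal.ge_of_forall_gt_iff_ge]
      intro c hc
      have hcR : c < (w-1)/2 := by exact_mod_cast hc
      set ε := ((w-1)/2 - c)/3 with hεdef
      have hε0 : 0 < ε := by rw [hεdef]; linarith
      have hlt : ((w - ε : ℝ) : EReal) < regularExp θ := by
        rw [hw]
        exact_mod_cast (by linarith : w - ε < w)
      unfold regularExp at hlt
      obtain ⟨g, hgS, hg⟩ := lt_sSup_iff.1 hlt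
      obtain ⟨γ, rfl, hγprop⟩ := hgS
      have hγR : w - ε < γ := by exact_mod_cast hg
      rcases le_or_gt 1 γ with h1γ | h1γ
      · refine le_trans ?_ (hLlow γ ε h1γ hε0 hγprop)
        exact_mod_cast (by linarith : c ≤ (γ-1)/2 - ε)
      · refine le_trans ?_ (hLlow 1 ε le_rfl hε0 (RegAux.dirichlet hθ1 hθ))
        exact_mod_cast (by linarith : c ≤ (1-1)/2 - ε)
  exact le_antisymm hle hge
end

section
/- Let θ and η be distinct irrational real numbers with θ > 1 and η > 1, and let Λ = {(θx − y, x + ηy) : (x, y) ∈ ℤ²} ⊂ ℝ². Then ω(Λ) = (max(ω(θ), ω(η)) − 1)/2. -/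
open Filter

namespace RegPairAux

open Set Real

/-- The map `(x, y) ↦ (θx − y, x + ηy)`. -/
def Fmap (θ η : ℝ) (p : ℤ × ℤ) : ℝ × ℝ :=
  (θ * (p.1 : ℝ) - (p.2 : ℝ), (p.1 : ℝ) + η * (p.2 : ℝ))

def Lat (θ η : ℝ) : Set (ℝ × ℝ) :=
  {z | ∃ x y : ℤ, z = (θ * (x : ℝ) - (y : ℝ), (x : ℝ) + η * (y : ℝ))}

def Sol (θ η γ : ℝ) : Set (ℝ × ℝ) :=
  {z : ℝ × ℝ | z ∈ Lat θ η ∧ z ≠ 0 ∧ latProd z ≤ (latNorm z) ^ (-γ)}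

def Appr (θ δ : ℝ) : Set (ℤ × ℤ) :=
  {xy : ℤ × ℤ | xy.1 ≠ 0 ∧ xy.2 ≠ 0 ∧
      |θ * (xy.1 : ℝ) - (xy.2 : ℝ)| ≤ |(xy.1 : ℝ)| ^ (-δ)}

lemma mem_lat_iff {θ η : ℝ} {z : ℝ × ℝ} : z ∈ Lat θ η ↔ ∃ p : ℤ × ℤ, z = Fmap θ η p := by
  constructor
  · rintro ⟨x, y, rfl⟩; exact ⟨(x, y), rfl⟩
  · rintro ⟨⟨x, y⟩, rfl⟩; exact ⟨x, y, rfl⟩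

lemma Fmap_inj {θ η : ℝ} (hθ1 : 1 < θ) (hη1 : 1 < η) : Function.Injective (Fmap θ η) := by
  have hD : (0:ℝ) < θ * η + 1 := by nlinarith
  rintro ⟨x, y⟩ ⟨x', y'⟩ h
  have h1 : θ * (x:ℝ) - y = θ * (x':ℝ) - y' := congrArg Prod.fst h
  have h2 : (x:ℝ) + η * y = (x':ℝ) + η * y' := congrArg Prod.snd h
  have ex : (θ * η + 1) * (x:ℝ) = (θ * η + 1) * (x':ℝ) := by linear_combination η * h1 + h2
  have ey : (θ * η + 1) * (y:ℝ) = (θ * η + 1) * (y':ℝ) := by linear_combination θ * h2 - h1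
  have hx : (x:ℝ) = (x':ℝ) := mul_left_cancel₀ (ne_of_gt hD) ex
  have hy : (y:ℝ) = (y':ℝ) := mul_left_cancel₀ (ne_of_gt hD) ey
  have : x = x' := by exact_mod_cast hx
  have : y = y' := by exact_mod_cast hy
  aesop

lemma finite_int_box (X Y : ℝ) :
    {p : ℤ × ℤ | |((p.1 : ℝ))| ≤ X ∧ |((p.2 : ℝ))| ≤ Y}.Finite := by
  apply Set.Finite.subset (Set.finite_Icc ((-⌈X⌉, -⌈Y⌉) : ℤ × ℤ) (⌈X⌉, ⌈Y⌉))
  rintro ⟨a, b⟩ ⟨h1, h2⟩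
  have ha : |a| ≤ ⌈X⌉ := by
    have : |(a:ℝ)| ≤ (⌈X⌉ : ℝ) := h1.trans (Int.le_ceil X)
    exact_mod_cast this
  have hb : |b| ≤ ⌈Y⌉ := by
    have : |(b:ℝ)| ≤ (⌈Y⌉ : ℝ) := h2.trans (Int.le_ceil Y)
    exact_mod_cast this
  rw [abs_le] at ha hb
  exact ⟨⟨ha.1, hb.1⟩, ⟨ha.2, hb.2⟩⟩

lemma lat_ball_finite {θ η : ℝ} (hθ1 : 1 < θ) (hη1 : 1 < η) (R : ℝ) :
    {z | z ∈ Lat θ η ∧ latNorm z ≤ R}.Finite := by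
  have hD : (1:ℝ) ≤ θ * η + 1 := by nlinarith
  apply Set.Finite.subset
    (Set.Finite.image (Fmap θ η) (finite_int_box ((η + 1) * R) ((θ + 1) * R)))
  rintro z ⟨hz, hR⟩
  rw [mem_lat_iff] at hz
  obtain ⟨⟨x, y⟩, rfl⟩ := hz
  refine ⟨(x, y), ⟨?_, ?_⟩, rfl⟩
  · -- |x| ≤ (η+1) R
    have e1 : η * (θ * (x:ℝ) - y) + ((x:ℝ) + η * y) = (θ * η + 1) * (x:ℝ) := by ring
    have h1 : |θ * (x:ℝ) - y| ≤ R := le_trans (le_max_left _ _) hR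
    have h2 : |(x:ℝ) + η * y| ≤ R := le_trans (le_max_right _ _) hR
    have hRe : |(θ * η + 1) * (x:ℝ)| ≤ η * R + R := by
      rw [← e1]
      calc |η * (θ * (x:ℝ) - y) + ((x:ℝ) + η * y)|
          ≤ |η * (θ * (x:ℝ) - y)| + |(x:ℝ) + η * y| := abs_add_le _ _
        _ ≤ η * R + R := by
            rw [abs_mul, abs_of_pos (by linarith : (0:ℝ) < η)]
            have : η * |θ * (x:ℝ) - y| ≤ η * R :=
              mul_le_mul_of_nonneg_left h1 (by linarith)
            linarith
    have : |(x:ℝ)| ≤ |(θ * η + 1) * (x:ℝ)| := by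
      rw [abs_mul, abs_of_pos (by linarith : (0:ℝ) < θ * η + 1)]
      nlinarith [abs_nonneg ((x:ℝ))]
    calc |(x:ℝ)| ≤ η * R + R := le_trans this hRe
      _ = (η + 1) * R := by ring
  · have e2 : θ * ((x:ℝ) + η * y) - (θ * (x:ℝ) - y) = (θ * η + 1) * (y:ℝ) := by ring
    have h1 : |θ * (x:ℝ) - y| ≤ R := le_trans (le_max_left _ _) hR
    have h2 : |(x:ℝ) + η * y| ≤ R := le_trans (le_max_right _ _) hR
    have hRe : |(θ * η + 1) * (y:ℝ)| ≤ θ * R + R := by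
      rw [← e2]
      calc |θ * ((x:ℝ) + η * y) - (θ * (x:ℝ) - y)|
          ≤ |θ * ((x:ℝ) + η * y)| + |θ * (x:ℝ) - y| := abs_sub _ _
        _ ≤ θ * R + R := by
            rw [abs_mul, abs_of_pos (by linarith : (0:ℝ) < θ)]
            have : θ * |(x:ℝ) + η * y| ≤ θ * R :=
              mul_le_mul_of_nonneg_left h2 (by linarith)
            linarith
    have : |(y:ℝ)| ≤ |(θ * η + 1) * (y:ℝ)| := by
      rw [abs_mul, abs_of_pos (by linarith : (0:ℝ) < θ * η + 1)]
      nlinarith [abs_nonneg ((y:ℝ))]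
    calc |(y:ℝ)| ≤ θ * R + R := le_trans this hRe
      _ = (θ + 1) * R := by ring

lemma exists_rpow_bound (p A : ℝ) (hp : 0 < p) :
    ∃ X : ℝ, 1 ≤ X ∧ ∀ t, X ≤ t → A ≤ t ^ p := by
  have h := (tendsto_rpow_atTop hp).eventually_ge_atTop A
  rw [eventually_atTop] at h
  obtain ⟨X, hX⟩ := h
  exact ⟨max X 1, le_max_right _ _, fun t ht => hX t (le_trans (le_max_left _ _) ht)⟩

lemma core_est {θ η : ℝ} (hθ1 : 1 < θ) (hη1 : 1 < η) (x y : ℤ)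
    (hx : max 1 (2 * (η + 1) / (θ * η - 1)) ≤ |(x:ℝ)|)
    (h1 : |θ * (x:ℝ) - y| ≤ 1) :
    1 ≤ |(x:ℝ) + η * y| ∧
      (θ * η - 1) / 2 * |(x:ℝ)| ≤ |(x:ℝ) + η * y| ∧
      |(x:ℝ) + η * y| ≤ (1 + η * (θ + 1)) * |(x:ℝ)| ∧ y ≠ 0 := by
  have hd : (0:ℝ) < θ * η - 1 := by nlinarith
  have hx1 : (1:ℝ) ≤ |(x:ℝ)| := le_trans (le_max_left _ _) hx
  have hx2 : 2 * (η + 1) / (θ * η - 1) ≤ |(x:ℝ)| := le_trans (le_max_right _ _) hx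
  have hx2' : 2 * (η + 1) ≤ (θ * η - 1) * |(x:ℝ)| := by
    rw [div_le_iff₀ hd] at hx2; nlinarith
  -- bounds on |y|
  have hy_ub : |(y:ℝ)| ≤ θ * |(x:ℝ)| + 1 := by
    have : |(y:ℝ)| ≤ |θ * (x:ℝ)| + |θ * (x:ℝ) - y| := by
      have := abs_sub (θ * (x:ℝ)) (θ * (x:ℝ) - y)
      simpa using this
    rw [abs_mul, abs_of_pos (by linarith : (0:ℝ) < θ)] at this
    linarith
  have hy_lb : θ * |(x:ℝ)| - 1 ≤ |(y:ℝ)| := by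
    have : |θ * (x:ℝ)| ≤ |θ * (x:ℝ) - y| + |(y:ℝ)| := by
      have := abs_sub_abs_le_abs_sub (θ * (x:ℝ)) ((y:ℝ))
      have h2 := abs_add_le (θ * (x:ℝ) - y) ((y:ℝ))
      simpa using h2
    rw [abs_mul, abs_of_pos (by linarith : (0:ℝ) < θ)] at this
    linarith
  -- lower bound on |x + ηy|
  have hlb0 : η * |(y:ℝ)| - |(x:ℝ)| ≤ |(x:ℝ) + η * y| := by
    have : |η * (y:ℝ)| ≤ |(x:ℝ) + η * y| + |(x:ℝ)| := by
      have h2 := abs_add_le ((x:ℝ) + η * y) (-(x:ℝ))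
      simpa using h2
    rw [abs_mul, abs_of_pos (by linarith : (0:ℝ) < η)] at this
    linarith
  have hη0 : (0:ℝ) < η := by linarith
  have hlb : (θ * η - 1) / 2 * |(x:ℝ)| ≤ |(x:ℝ) + η * y| := by
    have h3 : η * (θ * |(x:ℝ)| - 1) ≤ η * |(y:ℝ)| :=
      mul_le_mul_of_nonneg_left hy_lb (le_of_lt hη0)
    nlinarith
  have hone : (1:ℝ) ≤ |(x:ℝ) + η * y| := by nlinarith
  have hub : |(x:ℝ) + η * y| ≤ (1 + η * (θ + 1)) * |(x:ℝ)| := by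
    have h4 : |(x:ℝ) + η * y| ≤ |(x:ℝ)| + |η * (y:ℝ)| := abs_add_le _ _
    rw [abs_mul, abs_of_pos hη0] at h4
    have h5 : η * |(y:ℝ)| ≤ η * (θ * |(x:ℝ)| + 1) :=
      mul_le_mul_of_nonneg_left hy_ub (le_of_lt hη0)
    nlinarith
  refine ⟨hone, hlb, hub, ?_⟩
  intro hy0
  rw [hy0] at hy_lb
  simp at hy_lb
  nlinarith

lemma rpow_bridge_aux (K s δ t : ℝ) (hK : 0 < K) (ht0 : 0 < t) (h1 : K ^ s ≤ t ^ (δ - s)) :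
    t ^ (-δ) ≤ (K * t) ^ (-s) := by
  have hKs : (0:ℝ) < K ^ s := Real.rpow_pos_of_pos hK s
  have key : t ^ (-δ) * K ^ s ≤ t ^ (-s) := by
    calc t ^ (-δ) * K ^ s ≤ t ^ (-δ) * t ^ (δ - s) :=
          mul_le_mul_of_nonneg_left h1 (Real.rpow_nonneg ht0.le _)
      _ = t ^ (-s) := by rw [← Real.rpow_add ht0, show -δ + (δ - s) = -s by ring]
  rw [Real.mul_rpow hK.le ht0.le, Real.rpow_neg hK.le]
  calc t ^ (-δ) = t ^ (-δ) * K ^ s * (K ^ s)⁻¹ := by field_simp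
    _ ≤ t ^ (-s) * (K ^ s)⁻¹ := mul_le_mul_of_nonneg_right key (inv_nonneg.mpr hKs.le)
    _ = (K ^ s)⁻¹ * t ^ (-s) := mul_comm _ _

lemma rpow_bridge {c C s δ t b : ℝ} (hc : 0 < c) (hC : 0 < C) (ht : 0 < t)
    (hmax : max (c ^ s) (C ^ s) ≤ t ^ (δ - s)) (hb1 : c * t ≤ b) (hb2 : b ≤ C * t)
    (hbpos : 0 < b) : t ^ (-δ) ≤ b ^ (-s) := by
  rcases le_or_gt 0 s with hs | hs
  · exact le_trans (rpow_bridge_aux C s δ t hC ht (le_trans (le_max_right _ _) hmax))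
      (Real.rpow_le_rpow_of_nonpos hbpos hb2 (neg_nonpos.mpr hs))
  · exact le_trans (rpow_bridge_aux c s δ t hc ht (le_trans (le_max_left _ _) hmax))
      (Real.rpow_le_rpow (mul_nonneg hc.le ht.le) hb1 (by linarith))

lemma sq_helper {a b γ : ℝ} (ha : 0 ≤ a) (hb : 0 < b) (h : a ≤ b ^ (-(2 * γ + 1))) :
    (a * b) ^ ((1:ℝ)/2) ≤ b ^ (-γ) := by
  have hab : a * b ≤ b ^ (-(2 * γ)) := by
    calc a * b ≤ b ^ (-(2 * γ + 1)) * b := mul_le_mul_of_nonneg_right h hb.le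
      _ = b ^ (-(2 * γ + 1)) * b ^ (1:ℝ) := by rw [Real.rpow_one]
      _ = b ^ (-(2 * γ)) := by
          rw [← Real.rpow_add hb, show -(2 * γ + 1) + 1 = -(2 * γ) by ring]
  calc (a * b) ^ ((1:ℝ)/2) ≤ (b ^ (-(2 * γ))) ^ ((1:ℝ)/2) :=
      Real.rpow_le_rpow (mul_nonneg ha hb.le) hab (by norm_num)
    _ = b ^ (-γ) := by
      rw [← Real.rpow_mul hb.le, show -(2 * γ) * ((1:ℝ)/2) = -γ by ring]

lemma sq_helper' {a b γ : ℝ} (ha : 0 ≤ a) (hb : 0 < b) (h : (a * b) ^ ((1:ℝ)/2) ≤ b ^ (-γ)) :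
    a ≤ b ^ (-(2 * γ + 1)) := by
  have h2 : a * b ≤ b ^ (-(2 * γ)) := by
    have e1 : a * b = ((a * b) ^ ((1:ℝ)/2)) ^ (2:ℝ) := by
      conv_lhs => rw [← Real.rpow_one (a * b), show (1:ℝ) = (1/2) * 2 by norm_num,
        Real.rpow_mul (mul_nonneg ha hb.le)]
    rw [e1]
    calc ((a * b) ^ ((1:ℝ)/2)) ^ (2:ℝ) ≤ (b ^ (-γ)) ^ (2:ℝ) :=
        Real.rpow_le_rpow (Real.rpow_nonneg (mul_nonneg ha hb.le) _) h (by norm_num)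
      _ = b ^ (-(2 * γ)) := by rw [← Real.rpow_mul hb.le, show -γ * 2 = -(2 * γ) by ring]
  calc a ≤ b ^ (-(2 * γ)) / b := (le_div_iff₀ hb).mpr h2
    _ = b ^ (-(2 * γ + 1)) := by
      conv_lhs => rw [show b ^ (-(2 * γ)) / b = b ^ (-(2 * γ)) / b ^ (1:ℝ) by rw [Real.rpow_one]]
      rw [← Real.rpow_sub hb, show -(2 * γ) - 1 = -(2 * γ + 1) by ring]


lemma appr_small_finite {θ : ℝ} (hθ0 : 0 < θ) (δ : ℝ) (hδ : 0 ≤ δ) (X : ℝ) :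
    {p | p ∈ Appr θ δ ∧ |(p.1:ℝ)| ≤ X}.Finite := by
  apply Set.Finite.subset (finite_int_box X (θ * X + 1))
  rintro ⟨x, y⟩ ⟨⟨hx0, hy0, happ⟩, hX⟩
  have hx1 : (1:ℝ) ≤ |(x:ℝ)| := by
    have : (1:ℤ) ≤ |x| := Int.one_le_abs hx0
    calc (1:ℝ) ≤ (|x| : ℤ) := by exact_mod_cast this
      _ = |(x:ℝ)| := by push_cast; ring
  have hr1 : |(x:ℝ)| ^ (-δ) ≤ 1 :=
    Real.rpow_le_one_of_one_le_of_nonpos hx1 (neg_nonpos.mpr hδ)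
  have h1 : |θ * (x:ℝ) - y| ≤ 1 := happ.trans hr1
  refine ⟨hX, ?_⟩
  have : |(y:ℝ)| ≤ |θ * (x:ℝ)| + |θ * (x:ℝ) - y| := by
    have := abs_add_le (θ * (x:ℝ) - y) ((y:ℝ))
    have h2 := abs_sub (θ * (x:ℝ)) (θ * (x:ℝ) - y)
    simpa using h2
  rw [abs_mul, abs_of_pos hθ0] at this
  have : |(y:ℝ)| ≤ θ * |(x:ℝ)| + 1 := by linarith
  nlinarith

/-- Lower bound core: good approximations to `θ` give lattice solutions. -/
lemma lower_core {θ η : ℝ} (hθ1 : 1 < θ) (hη1 : 1 < η) (γ δ : ℝ) (hδ1 : 1 ≤ δ)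
    (hγδ : 2 * γ + 1 < δ) (hA : (Appr θ δ).Infinite) : (Sol θ η γ).Infinite := by
  set c : ℝ := (θ * η - 1) / 2 with hc_def
  set C : ℝ := 1 + η * (θ + 1) with hC_def
  have hd : (0:ℝ) < θ * η - 1 := by nlinarith
  have hc : 0 < c := by positivity
  have hC : 0 < C := by positivity
  obtain ⟨X, hX1, hXb⟩ := exists_rpow_bound (δ - (2 * γ + 1))
    (max (c ^ (2 * γ + 1)) (C ^ (2 * γ + 1))) (by linarith)
  set X₀ : ℝ := max X (max 1 (2 * (η + 1) / (θ * η - 1))) with hX₀_def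
  -- the set of good approximations with large x is infinite
  have hA' : {p | p ∈ Appr θ δ ∧ X₀ ≤ |(p.1:ℝ)|}.Infinite := by
    have := hA.diff (appr_small_finite (by linarith : (0:ℝ) < θ) δ (by linarith) X₀)
    apply this.mono
    rintro p ⟨hp, hp2⟩
    refine ⟨hp, ?_⟩
    by_contra h
    exact hp2 ⟨hp, le_of_not_ge h⟩
  have hinj := (Fmap_inj hθ1 hη1 (θ := θ) (η := η))
  apply Set.Infinite.mono _ (Set.Infinite.image hinj.injOn hA')
  rintro z ⟨⟨x, y⟩, ⟨⟨hx0, hy0, happ⟩, hxX⟩, rfl⟩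
  have hx1 : (1:ℝ) ≤ |(x:ℝ)| := le_trans (le_trans (le_max_left _ _) (le_max_right X _)) hxX
  have hxpos : (0:ℝ) < |(x:ℝ)| := by linarith
  have hz1le : |θ * (x:ℝ) - y| ≤ 1 :=
    happ.trans (Real.rpow_le_one_of_one_le_of_nonpos hx1 (by linarith))
  obtain ⟨hone, hlb, hub, _⟩ := core_est hθ1 hη1 x y (le_trans (le_max_right X _) hxX) hz1le
  set z1 : ℝ := θ * (x:ℝ) - y
  set z2 : ℝ := (x:ℝ) + η * y
  have hz2pos : (0:ℝ) < |z2| := by linarith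
  -- key estimate
  have hkey : |z1| ≤ |z2| ^ (-(2 * γ + 1)) := by
    refine le_trans happ ?_
    refine rpow_bridge hc hC hxpos ?_ hlb hub hz2pos
    exact hXb _ (le_trans (le_max_left _ _) hxX)
  -- assemble membership in Sol
  refine ⟨⟨x, y, rfl⟩, ?_, ?_⟩
  · intro h
    have : z2 = 0 := congrArg Prod.snd h
    rw [this] at hone; simp at hone; linarith
  · have hnorm : latNorm (Fmap θ η (x, y)) = |z2| := by
      unfold latNorm Fmap
      exact max_eq_right (le_trans hz1le hone)
    have hprod : latProd (Fmap θ η (x, y)) = (|z1| * |z2|) ^ ((1:ℝ)/2) := rfl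
    rw [hnorm, hprod]
    exact sq_helper (abs_nonneg _) hz2pos hkey


/-- Upper bound core: lattice solutions with `|z₁| ≤ |z₂|` give good approximations to `θ`. -/
lemma upper_core {θ η : ℝ} (hθ1 : 1 < θ) (hη1 : 1 < η) (γ δ : ℝ) (hγ : 0 < γ)
    (hδ : δ < 2 * γ + 1)
    (hB : {z | z ∈ Sol θ η γ ∧ |z.1| ≤ |z.2|}.Infinite) : (Appr θ δ).Infinite := by
  set c : ℝ := (θ * η - 1) / 2 with hc_def
  have hd : (0:ℝ) < θ * η - 1 := by nlinarith
  have hc : 0 < c := by positivity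
  obtain ⟨X, hX1, hXb⟩ := exists_rpow_bound ((2 * γ + 1) - δ) (c ^ (-(2 * γ + 1)))
    (by linarith)
  set X₀ : ℝ := max X (max 1 (2 * (η + 1) / (θ * η - 1))) with hX₀_def
  set R : ℝ := (θ * η + 1) * X₀ + η + 1 with hR_def
  have hB' : {z | (z ∈ Sol θ η γ ∧ |z.1| ≤ |z.2|) ∧ R ≤ latNorm z}.Infinite := by
    have := hB.diff (lat_ball_finite hθ1 hη1 R)
    apply this.mono
    rintro z ⟨hz, hz2⟩
    refine ⟨hz, ?_⟩
    by_contra h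
    exact hz2 ⟨hz.1.1, le_of_not_ge h⟩
  apply Set.Infinite.of_image (Fmap θ η)
  apply Set.Infinite.mono _ hB'
  rintro z ⟨⟨⟨hzlat, hz0, hzineq⟩, hz12⟩, hzR⟩
  rw [mem_lat_iff] at hzlat
  obtain ⟨⟨x, y⟩, rfl⟩ := hzlat
  set z1 : ℝ := θ * (x:ℝ) - y with hz1_def
  set z2 : ℝ := (x:ℝ) + η * y with hz2_def
  have hz12' : |z1| ≤ |z2| := hz12
  have hnorm : latNorm (Fmap θ η (x, y)) = |z2| := max_eq_right hz12'
  rw [hnorm] at hzR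
  have hX₀1 : (1:ℝ) ≤ X₀ := le_trans (le_max_left _ _) (le_max_right X _)
  have hD : (0:ℝ) < θ * η + 1 := by nlinarith
  have h6 : (θ * η + 1) * 1 ≤ (θ * η + 1) * X₀ := mul_le_mul_of_nonneg_left hX₀1 hD.le
  rw [hR_def] at hzR
  have hz2ge1 : (1:ℝ) ≤ |z2| := by linarith
  have hz2pos : (0:ℝ) < |z2| := by linarith
  -- from the solution inequality, |z1| ≤ |z2| ^ (-(2γ+1))
  have hkey : |z1| ≤ |z2| ^ (-(2 * γ + 1)) := by
    have hprod : latProd (Fmap θ η (x, y)) = (|z1| * |z2|) ^ ((1:ℝ)/2) := rfl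
    have h' := hzineq
    rw [hnorm, hprod] at h'
    exact sq_helper' (abs_nonneg z1) hz2pos h'
  have hz1le1 : |z1| ≤ 1 :=
    hkey.trans (Real.rpow_le_one_of_one_le_of_nonpos hz2ge1 (by linarith))
  -- |x| is large
  have hxlarge : X₀ ≤ |(x:ℝ)| := by
    have e1 : η * z1 + z2 = (θ * η + 1) * (x:ℝ) := by rw [hz1_def, hz2_def]; ring
    have h2 : |z2| - η * |z1| ≤ |η * z1 + z2| := by
      have := abs_add_le (η * z1 + z2) (-(η * z1))
      have h3 : |η * z1| = η * |z1| := by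
        rw [abs_mul, abs_of_pos (by linarith : (0:ℝ) < η)]
      simp only [abs_neg] at this
      rw [h3] at this
      simpa using this
    have h4 : |(θ * η + 1) * (x:ℝ)| = (θ * η + 1) * |(x:ℝ)| := by
      rw [abs_mul, abs_of_pos (by nlinarith : (0:ℝ) < θ * η + 1)]
    have h7 : η * |z1| ≤ η * 1 := mul_le_mul_of_nonneg_left hz1le1 (by linarith : (0:ℝ) ≤ η)
    have h5 : (θ * η + 1) * X₀ + 1 ≤ (θ * η + 1) * |(x:ℝ)| := by
      rw [← h4, ← e1]
      linarith
    by_contra h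
    push_neg at h
    have := mul_lt_mul_of_pos_left h hD
    linarith
  have hx1 : (1:ℝ) ≤ |(x:ℝ)| := le_trans hX₀1 hxlarge
  have hxpos : (0:ℝ) < |(x:ℝ)| := by linarith
  obtain ⟨hone, hlb, hub, hy0⟩ := core_est hθ1 hη1 x y
    (le_trans (le_max_right X _) hxlarge) hz1le1
  have hx0 : x ≠ 0 := by
    intro h; rw [h] at hx1; simp at hx1; linarith
  refine ⟨(x, y), ⟨hx0, hy0, ?_⟩, rfl⟩
  -- |θ x − y| ≤ |x| ^ (-δ)
  calc |θ * (x:ℝ) - y| = |z1| := rfl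
    _ ≤ |z2| ^ (-(2 * γ + 1)) := hkey
    _ ≤ (c * |(x:ℝ)|) ^ (-(2 * γ + 1)) :=
        Real.rpow_le_rpow_of_nonpos (by positivity) hlb (by linarith)
    _ ≤ |(x:ℝ)| ^ (-δ) := by
        rw [Real.mul_rpow hc.le (abs_nonneg _)]
        have h6 : c ^ (-(2 * γ + 1)) ≤ |(x:ℝ)| ^ ((2 * γ + 1) - δ) :=
          hXb _ (le_trans (le_max_left _ _) hxlarge)
        calc c ^ (-(2 * γ + 1)) * |(x:ℝ)| ^ (-(2 * γ + 1))
            ≤ |(x:ℝ)| ^ ((2 * γ + 1) - δ) * |(x:ℝ)| ^ (-(2 * γ + 1)) :=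
              mul_le_mul_of_nonneg_right h6 (Real.rpow_nonneg (abs_nonneg _) _)
          _ = |(x:ℝ)| ^ (-δ) := by
              rw [← Real.rpow_add hxpos, show (2 * γ + 1) - δ + -(2 * γ + 1) = -δ by ring]

/-- Dirichlet: the exponent 1 always admits infinitely many approximations. -/
lemma appr_one_infinite {θ : ℝ} (hθ1 : 1 < θ) (hθ : Irrational θ) : (Appr θ 1).Infinite := by
  have h := Real.infinite_rat_abs_sub_lt_one_div_den_sq_of_irrational hθ
  have hinj : Function.Injective (fun q : ℚ => ((q.den : ℤ), q.num)) := by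
    intro p q hpq
    simp only [Prod.mk.injEq] at hpq
    have hd : p.den = q.den := by exact_mod_cast hpq.1
    exact Rat.ext hpq.2 hd
  apply Set.Infinite.mono _ (Set.Infinite.image hinj.injOn h)
  rintro _ ⟨q, hq, rfl⟩
  simp only [Set.mem_setOf_eq] at hq
  show ((q.den : ℤ), q.num) ∈ Appr θ 1
  have hden : (0:ℝ) < (q.den : ℝ) := by exact_mod_cast q.pos
  have hcast : (q : ℝ) = (q.num : ℝ) / (q.den : ℝ) := by
    rw [Rat.cast_def]
  have hq1 : |θ - q| < 1 := by
    have : 1 / ((q.den : ℝ))^2 ≤ 1 := by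
      rw [div_le_one (by positivity)]
      have : (1:ℝ) ≤ (q.den : ℝ) := by exact_mod_cast q.pos
      nlinarith
    linarith
  have hqpos : (0:ℝ) < (q : ℝ) := by
    have := abs_lt.mp hq1
    linarith
  have hnum0 : q.num ≠ 0 := by
    intro h0
    have : (q:ℚ) = 0 := Rat.zero_of_num_zero h0
    rw [this] at hqpos; simp at hqpos
  refine ⟨(by exact_mod_cast q.pos.ne' : ((q.den : ℤ)) ≠ 0), hnum0, ?_⟩
  have hmain : |θ * (q.den : ℝ) - (q.num : ℝ)| ≤ ((q.den : ℝ))⁻¹ := by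
    have e : θ * (q.den : ℝ) - (q.num : ℝ) = (θ - q) * (q.den : ℝ) := by
      rw [hcast]; field_simp
    rw [e, abs_mul, abs_of_pos hden]
    have h2 : |θ - q| * (q.den : ℝ) < (1 / ((q.den : ℝ))^2) * (q.den : ℝ) :=
      mul_lt_mul_of_pos_right hq hden
    have h3 : (1 / ((q.den : ℝ))^2) * (q.den : ℝ) = ((q.den : ℝ))⁻¹ := by
      field_simp
    rw [h3] at h2
    exact h2.le
  have habs : |((q.den : ℤ) : ℝ)| = (q.den : ℝ) := by
    rw [abs_of_pos (by exact_mod_cast q.pos)]; norm_cast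
  rw [habs, Real.rpow_neg_one]
  simpa using hmain

/-- The swap `(z₁, z₂) ↦ (z₂, −z₁)` carries `Sol θ η γ` to `Sol η θ γ`. -/
lemma swap_mem {θ η γ : ℝ} {z : ℝ × ℝ} (hz : z ∈ Sol θ η γ) :
    (z.2, -z.1) ∈ Sol η θ γ := by
  obtain ⟨⟨x, y, hzeq⟩, hz0, hineq⟩ := hz
  refine ⟨⟨y, -x, ?_⟩, ?_, ?_⟩
  · rw [hzeq]; push_cast; simp; constructor <;> ring
  · intro h
    apply hz0
    have h1 : z.2 = 0 := congrArg Prod.fst h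
    have h2 : -z.1 = 0 := congrArg Prod.snd h
    have : z.1 = 0 := by linarith
    exact Prod.ext this h1
  · have hn : latNorm (z.2, -z.1) = latNorm z := by
      unfold latNorm; simp [abs_neg, max_comm]
    have hp : latProd (z.2, -z.1) = latProd z := by
      unfold latProd; simp [abs_neg, mul_comm]
    rw [hn, hp]; exact hineq

lemma swap_inj : Function.Injective (fun z : ℝ × ℝ => (z.2, -z.1)) := by
  rintro ⟨a, b⟩ ⟨c, d⟩ h
  simp only [Prod.mk.injEq] at h
  obtain ⟨h1, h2⟩ := h
  exact Prod.ext (by linarith) h1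

end RegPairAux

open RegPairAux

/-- For distinct irrational `θ, η > 1` and the lattice
`Λ = {(θx − y, x + ηy) : (x, y) ∈ ℤ²}`, one has `ω(Λ) = (max(ω(θ), ω(η)) − 1)/2`. -/
theorem regularExpLat_pair (θ η : ℝ) (hθη : θ ≠ η)
    (hθ1 : 1 < θ) (hη1 : 1 < η) (hθ : Irrational θ) (hη : Irrational η) :
    regularExpLat
        {z : ℝ × ℝ | ∃ x y : ℤ, z = (θ * (x : ℝ) - (y : ℝ), (x : ℝ) + η * (y : ℝ))} =
      (max (regularExp θ) (regularExp η) - 1) / 2 := by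
  show sSup {g : EReal | ∃ γ : ℝ, g = (γ : EReal) ∧ (Sol θ η γ).Infinite} =
      (max (regularExp θ) (regularExp η) - 1) / 2

  set M : EReal := max (regularExp θ) (regularExp η) with hM_def
  have hMθ1 : (1 : EReal) ≤ regularExp θ :=
    le_sSup ⟨1, by norm_num, appr_one_infinite hθ1 hθ⟩
  have hM1 : (1 : EReal) ≤ M := le_trans hMθ1 (le_max_left _ _)
  have hb1 : (⊥ : EReal) < 1 := by rw [← EReal.coe_one]; exact EReal.bot_lt_coe 1
  have hMb : M ≠ ⊥ := (hb1.trans_le hM1).ne'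
  have h2t : (2 : EReal) ≠ ⊤ := by
    rw [show (2 : EReal) = ((2 : ℝ) : EReal) by norm_cast]; exact EReal.coe_ne_top 2
  have ecoe : ∀ m : ℝ, ((m : EReal) - 1) / 2 = (((m - 1) / 2 : ℝ) : EReal) := by
    intro m
    rw [← EReal.coe_one, ← EReal.coe_sub, show (2 : EReal) = ((2 : ℝ) : EReal) by norm_cast,
      ← EReal.coe_div]
  -- the upper-bound core, combined over the two sides
  have upperθη : ∀ γ : ℝ, 0 < γ → (Sol θ η γ).Infinite → ((2 * γ + 1 : ℝ) : EReal) ≤ M := by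
    intro γ hγ hinf
    have hsplit : Sol θ η γ =
        {z | z ∈ Sol θ η γ ∧ |z.1| ≤ |z.2|} ∪ {z | z ∈ Sol θ η γ ∧ ¬(|z.1| ≤ |z.2|)} := by
      ext z; simp only [Set.mem_union, Set.mem_setOf_eq]; tauto
    rw [hsplit] at hinf
    rcases Set.infinite_union.mp hinf with hA | hB
    · have hle : ∀ δ : ℝ, δ < 2 * γ + 1 → ((δ : EReal)) ≤ regularExp θ := fun δ hδ =>
        le_sSup ⟨δ, rfl, upper_core hθ1 hη1 γ δ hγ hδ hA⟩
      have hfin : ((2 * γ + 1 : ℝ) : EReal) ≤ regularExp θ := by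
        by_contra hcon
        push_neg at hcon
        obtain ⟨δ, h1, h2⟩ := EReal.exists_between_coe_real hcon
        exact absurd (hle δ (by exact_mod_cast h2)) (not_le.mpr h1)
      exact hfin.trans (le_max_left _ _)
    · have hA' : {w | w ∈ Sol η θ γ ∧ |w.1| ≤ |w.2|}.Infinite := by
        apply Set.Infinite.mono _ (Set.Infinite.image swap_inj.injOn hB)
        rintro _ ⟨z, ⟨hz, hz12⟩, rfl⟩
        refine ⟨swap_mem hz, ?_⟩
        show |z.2| ≤ |(-z.1)|
        rw [abs_neg]
        exact (not_le.mp hz12).le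
      have hle : ∀ δ : ℝ, δ < 2 * γ + 1 → ((δ : EReal)) ≤ regularExp η := fun δ hδ =>
        le_sSup ⟨δ, rfl, upper_core hη1 hθ1 γ δ hγ hδ hA'⟩
      have hfin : ((2 * γ + 1 : ℝ) : EReal) ≤ regularExp η := by
        by_contra hcon
        push_neg at hcon
        obtain ⟨δ, h1, h2⟩ := EReal.exists_between_coe_real hcon
        exact absurd (hle δ (by exact_mod_cast h2)) (not_le.mpr h1)
      exact hfin.trans (le_max_right _ _)
  -- lower-bound membership
  have lowmem : ∀ γ : ℝ, (γ : EReal) < (M - 1) / 2 → (Sol θ η γ).Infinite := by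
    intro γ hγ
    rcases lt_or_ge (2 * γ + 1) 1 with h1 | h1
    · exact lower_core hθ1 hη1 γ 1 le_rfl h1 (appr_one_infinite hθ1 hθ)
    · have hM2 : ((2 * γ + 1 : ℝ) : EReal) < M := by
        by_cases hMt : M = ⊤
        · rw [hMt]; exact EReal.coe_lt_top _
        · have hm := EReal.coe_toReal hMt hMb
          rw [← hm] at hγ ⊢
          rw [ecoe] at hγ
          have hγ' : γ < (M.toReal - 1) / 2 := by exact_mod_cast hγ
          exact_mod_cast (by linarith : (2 * γ + 1 : ℝ) < M.toReal)
      rw [hM_def] at hM2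
      rcases lt_max_iff.mp hM2 with hside | hside
      · obtain ⟨g, hg_mem, hg_lt⟩ := lt_sSup_iff.mp hside
        obtain ⟨δ, rfl, hδinf⟩ := hg_mem
        have hδγ : 2 * γ + 1 < δ := by exact_mod_cast hg_lt
        exact lower_core hθ1 hη1 γ δ (le_trans h1 hδγ.le) hδγ hδinf
      · obtain ⟨g, hg_mem, hg_lt⟩ := lt_sSup_iff.mp hside
        obtain ⟨δ, rfl, hδinf⟩ := hg_mem
        have hδγ : 2 * γ + 1 < δ := by exact_mod_cast hg_lt
        have hs := lower_core hη1 hθ1 γ δ (le_trans h1 hδγ.le) hδγ hδinf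
        apply Set.Infinite.mono _ (Set.Infinite.image swap_inj.injOn hs)
        rintro _ ⟨w, hw, rfl⟩
        exact swap_mem hw
  apply le_antisymm
  · apply sSup_le
    rintro g ⟨γ, rfl, hγinf⟩
    rcases le_or_gt γ 0 with hγ0 | hγ0
    · have h0 : ((γ : ℝ) : EReal) ≤ ((0 : ℝ) : EReal) := by exact_mod_cast hγ0
      refine h0.trans ?_
      have e0 : ((0:ℝ) : EReal) = 0 := by norm_cast
      rw [e0]
      apply EReal.div_nonneg _ (by norm_num : (0 : EReal) ≤ 2)
      have hs := EReal.sub_le_sub hM1 (le_refl (1 : EReal))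
      have e1 : (1 : EReal) - 1 = 0 := by
        rw [← EReal.coe_one, ← EReal.coe_sub]; norm_num
      rw [e1] at hs
      exact hs
    · have hby := upperθη γ hγ0 hγinf
      by_cases hMt : M = ⊤
      · rw [hMt]
        have htop : ((⊤ : EReal) - 1) / 2 = ⊤ := by
          rw [← EReal.coe_one, EReal.top_sub_coe]
          exact EReal.top_div_of_pos_ne_top (by norm_num) h2t
        rw [htop]; exact le_top
      · have hm := EReal.coe_toReal hMt hMb
        rw [← hm] at hby ⊢
        rw [ecoe]
        have hr : (2 * γ + 1 : ℝ) ≤ M.toReal := by exact_mod_cast hby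
        exact_mod_cast (by linarith : γ ≤ (M.toReal - 1) / 2)
  · by_contra hcon
    push_neg at hcon
    obtain ⟨γ, h1, h2⟩ := EReal.exists_between_coe_real hcon
    have hmem : ((γ : ℝ) : EReal) ∈
        {g : EReal | ∃ γ : ℝ, g = (γ : EReal) ∧ (Sol θ η γ).Infinite} :=
      ⟨γ, rfl, lowmem γ h2⟩
    exact absurd (le_sSup hmem) (not_le.mpr h1)
end
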